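/- arXiv:2501.05315 — 6 statements merged into one kernel-verified Lean document; each statement's English description precedes it below -/
import Mathlib

section
/- Let p_1, …, p_n be distinct points in ℝ³ with p_i = (p_{i1}, p_{i2}, p_{i3}) and ζ_1, …, ζ_n ∈ ℝ. Define the polynomial map 𝒫 : ℝ³ × ℝⁿ → ℝ³ × ℝⁿ with components ℛ_j(x,u) = Σ_{i=1}^n ζ_i (x_j − p_{ij}) ∏_{ℓ≠i} u_ℓ³ for j = 1,2,3 and 𝒬_m(x,u) = u_m² − ‖x − p_m‖² for m = 1, …, n. Then a point x ∈ ℝ³ ∖ {p_1, …, p_n} is a critical point of V(x) = Σ_{i=1}^n ζ_i/‖x − p_i‖ if and only if 𝒫(x, r(x)) = 0, where r(x) = (‖x − p_1‖, …, ‖x − p_n‖). -/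
noncomputable section

open Finset

abbrev E3 := EuclideanSpace ℝ (Fin 3)

/-- The electrostatic potential of `n` point charges of magnitudes `ζ i` at points `p i`. -/
def pot {n : ℕ} (p : Fin n → E3) (ζ : Fin n → ℝ) : E3 → ℝ :=
  fun x => ∑ i, ζ i / ‖x - p i‖

/-- The polynomial `ℛ_j(x,u) = ∑ i, ζ i (x_j - p_{ij}) ∏_{ℓ ≠ i} u_ℓ³`. -/
def Rpoly {n : ℕ} (p : Fin n → E3) (ζ : Fin n → ℝ) (j : Fin 3) (x : E3)
    (u : Fin n → ℝ) : ℝ :=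
  ∑ i, ζ i * (x j - p i j) * ∏ ℓ ∈ Finset.univ.erase i, u ℓ ^ 3

/-- The polynomial `𝒬_m(x,u) = u_m² - ‖x - p_m‖²`. -/
def Qpoly {n : ℕ} (p : Fin n → E3) (m : Fin n) (x : E3) (u : Fin n → ℝ) : ℝ :=
  u m ^ 2 - ‖x - p m‖ ^ 2

/-- The polynomial map `𝒫 : ℝ³ × ℝⁿ → ℝ³ × ℝⁿ` with components `ℛ_j` and `𝒬_m`. -/
def Ppoly {n : ℕ} (p : Fin n → E3) (ζ : Fin n → ℝ) :
    E3 × (Fin n → ℝ) → (Fin 3 → ℝ) × (Fin n → ℝ) :=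
  fun z => (fun j => Rpoly p ζ j z.1 z.2, fun m => Qpoly p m z.1 z.2)


/-! The gradient of `V` is `-∑ ζᵢ (x - pᵢ) / ‖x - pᵢ‖³`. Multiplying its `j`-th coordinate by the
nonzero common denominator `∏ ℓ, ‖x - p ℓ‖³` gives exactly `-ℛ_j(x, r(x))`, while
`𝒬_m(x, r(x)) = 0` holds identically. -/

theorem Finset.prod_erase_eq_div₀ {ι K : Type*} [CommGroupWithZero K] [DecidableEq ι]
    {s : Finset ι} {a : ι} (f : ι → K) (ha : a ∈ s) (hfa : f a ≠ 0) :
    ∏ x ∈ s.erase a, f x = (∏ x ∈ s, f x) / f a := by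
  rw [eq_div_iff hfa, prod_erase_mul _ _ ha]

theorem hasFDerivAt_norm {E : Type*} [NormedAddCommGroup E] [InnerProductSpace ℝ E] {y : E}
    (hy : y ≠ 0) : HasFDerivAt (‖·‖) (‖y‖⁻¹ • innerSL ℝ y) y := by
  have h := (hasStrictFDerivAt_norm_sq y).hasFDerivAt.sqrt (by positivity)
  simp only [Real.sqrt_sq (norm_nonneg _)] at h
  refine h.congr_fderiv ?_
  ext v
  simp only [smul_apply, coe_innerSL_apply, nsmul_eq_mul, Nat.cast_ofNat, smul_eq_mul]
  field_simp

theorem hasFDerivAt_inv_norm {E : Type*} [NormedAddCommGroup E] [InnerProductSpace ℝ E] {y : E}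
    (hy : y ≠ 0) : HasFDerivAt (fun z : E => ‖z‖⁻¹) (-(‖y‖ ^ 3)⁻¹ • innerSL ℝ y) y := by
  have hy' : ‖y‖ ≠ 0 := norm_ne_zero_iff.mpr hy
  refine ((hasDerivAt_inv hy').comp_hasFDerivAt y (hasFDerivAt_norm hy)).congr_fderiv ?_
  rw [smul_smul]; congr 1; field_simp

def electricField {n : ℕ} (p : Fin n → E3) (ζ : Fin n → ℝ) (x : E3) : E3 :=
  ∑ i, (ζ i / ‖x - p i‖ ^ 3) • (x - p i)

theorem hasGradientAt_pot {n : ℕ} (p : Fin n → E3) (ζ : Fin n → ℝ) {x : E3}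
    (hx : ∀ i, x ≠ p i) :
    HasGradientAt (pot p ζ) (-electricField p ζ x) x := by
  rw [hasGradientAt_iff_hasFDerivAt]
  have hterm (i : Fin n) : HasFDerivAt (fun y : E3 => ζ i / ‖y - p i‖)
      (ζ i • -(‖x - p i‖ ^ 3)⁻¹ • innerSL ℝ (x - p i)) x := by
    simp only [div_eq_mul_inv]
    exact (((hasFDerivAt_inv_norm (sub_ne_zero.mpr (hx i))).comp x
      ((hasFDerivAt_id x).sub_const (p i))).const_mul (ζ i)).congr_fderiv (by simp)
  refine (HasFDerivAt.fun_sum (u := univ) fun i _ => hterm i).congr_fderiv ?_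
  ext v
  simp [electricField, div_eq_mul_inv, mul_assoc]

theorem fderiv_pot_eq_zero_iff {n : ℕ} (p : Fin n → E3) (ζ : Fin n → ℝ) {x : E3}
    (hx : ∀ i, x ≠ p i) : fderiv ℝ (pot p ζ) x = 0 ↔ electricField p ζ x = 0 := by
  rw [(hasGradientAt_pot p ζ hx).hasFDerivAt.fderiv, LinearIsometryEquiv.map_eq_zero_iff,
    neg_eq_zero]

theorem Rpoly_dist_eq {n : ℕ} (p : Fin n → E3) (ζ : Fin n → ℝ) (j : Fin 3) {x : E3}
    (hx : ∀ i, x ≠ p i) :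
    Rpoly p ζ j x (fun i => ‖x - p i‖) = (∏ ℓ, ‖x - p ℓ‖ ^ 3) * electricField p ζ x j := by
  have hr (i : Fin n) : ‖x - p i‖ ^ 3 ≠ 0 :=
    pow_ne_zero _ (norm_ne_zero_iff.mpr (sub_ne_zero.mpr (hx i)))
  simp only [Rpoly, electricField, WithLp.ofLp_sum, WithLp.ofLp_smul, WithLp.ofLp_sub,
    Finset.sum_apply, Pi.smul_apply, Pi.sub_apply, smul_eq_mul, mul_sum]
  refine sum_congr rfl fun i _ => ?_
  rw [prod_erase_eq_div₀ _ (mem_univ i) (hr i)]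
  field_simp

theorem stmt2_general (n : ℕ) (p : Fin n → E3) (ζ : Fin n → ℝ)
    (x : E3) (hx : ∀ i, x ≠ p i) :
    fderiv ℝ (pot p ζ) x = 0 ↔ Ppoly p ζ (x, fun i => ‖x - p i‖) = 0 := by
  have hprod : ∏ ℓ, ‖x - p ℓ‖ ^ 3 ≠ 0 :=
    prod_ne_zero_iff.mpr fun i _ => pow_ne_zero _ (norm_ne_zero_iff.mpr (sub_ne_zero.mpr (hx i)))
  have hQ : (fun m => Qpoly p m x fun i => ‖x - p i‖) = 0 := by
    funext m; simp [Qpoly]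
  rw [fderiv_pot_eq_zero_iff p ζ hx, Ppoly, Prod.mk_eq_zero]
  simp only [hQ, and_true, funext_iff, Rpoly_dist_eq p ζ _ hx, Pi.zero_apply, mul_eq_zero, hprod,
    false_or]
  exact PiLp.ext_iff

/-- a point `x` of the domain is a critical point of `V` iff
`𝒫(x, r(x)) = 0` where `r(x) = (‖x - p 1‖, …, ‖x - p n‖)`. -/
theorem stmt2 (n : ℕ) (p : Fin n → E3) (hp : Function.Injective p) (ζ : Fin n → ℝ)
    (x : E3) (hx : ∀ i, x ≠ p i) :
    fderiv ℝ (pot p ζ) x = 0 ↔ Ppoly p ζ (x, fun i => ‖x - p i‖) = 0 :=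
  stmt2_general n p ζ x hx
end
end

section
/- Fix distinct points p_2, …, p_n ∈ ℝ³, charges ζ_1, …, ζ_n ∈ ℝ with ζ_1 ≠ 0, and a point x ∈ ℝ³ with x ≠ p_i for all i ≥ 2. Define F : ℝ³ → ℝ by F(p_1) = Σ_{i=1}^n ζ_i ∏_{ℓ≠i} ‖x − p_ℓ‖³ (as a function of the position p_1 of the first charge). Then at every p_1 ∈ ℝ³ with p_1 ≠ x and F(p_1) = 0, the gradient of F does not vanish; that is, F is a submersion at every point of its zero set away from x. -/
/-!
Only the terms with `i ≠ 1` depend on `p₁`, each through the common factor `‖x - p₁‖³`, so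
`F(p₁) = A + ‖x - p₁‖³ B` with `A = ζ₁ ∏_{ℓ ≠ 1} ‖x - p_ℓ‖³ ≠ 0`. On the zero set this forces
`B ≠ 0`, and then the derivative of `F` in the radial direction `x - p₁` is
`-3 ‖x - p₁‖³ B ≠ 0`.
-/

noncomputable section

open Finset

theorem sum_mul_prod_erase_update {ι α R : Type*} [Fintype ι] [DecidableEq ι] [CommSemiring R]
    (c : ι → R) (f : α → R) (p : ι → α) (i₀ : ι) (y : α) :
    ∑ i, c i * ∏ ℓ ∈ univ.erase i, f (Function.update p i₀ y ℓ) =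
      c i₀ * ∏ ℓ ∈ univ.erase i₀, f (p ℓ) +
        f y * ∑ i ∈ univ.erase i₀, c i * ∏ ℓ ∈ (univ.erase i).erase i₀, f (p ℓ) := by
  have update_eq {s : Finset ι} {ℓ : ι} (hℓ : ℓ ∈ s.erase i₀) : Function.update p i₀ y ℓ = p ℓ :=
    Function.update_of_ne (ne_of_mem_erase hℓ) _ _
  rw [← add_sum_erase _ _ (mem_univ i₀), mul_sum]
  congr 1
  · exact congrArg _ (prod_congr rfl fun ℓ hℓ => by rw [update_eq hℓ])
  · refine sum_congr rfl fun i hi => ?_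
    have hi₀ : i₀ ∈ univ.erase i := mem_erase.mpr ⟨(ne_of_mem_erase hi).symm, mem_univ _⟩
    rw [← mul_prod_erase _ _ hi₀, Function.update_self, prod_congr rfl fun ℓ hℓ => by
      rw [update_eq hℓ]]
    ring

section NormPow

variable {E : Type*} [NormedAddCommGroup E]

theorem hasDerivAt_norm_sub_add_smul_pow [NormedSpace ℝ E] (x y : E) (k : ℕ) :
    HasDerivAt (fun t : ℝ => ‖x - (y + t • (x - y))‖ ^ k) (-k * ‖x - y‖ ^ k) 0 := by
  have radial : (fun t : ℝ => ‖x - (y + t • (x - y))‖ ^ k) =ᶠ[nhds 0]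
      fun t => (1 - t) ^ k * ‖x - y‖ ^ k := by
    filter_upwards [Iio_mem_nhds one_pos] with t ht
    have hsub : x - (y + t • (x - y)) = (1 - t) • (x - y) := by module
    rw [hsub, norm_smul, Real.norm_of_nonneg (sub_nonneg.mpr (le_of_lt ht)), mul_pow]
  refine HasDerivAt.congr_of_eventuallyEq ?_ radial
  simpa using (((hasDerivAt_id (0 : ℝ)).const_sub 1).fun_pow k).mul_const (‖x - y‖ ^ k)

theorem differentiableAt_norm_sub_pow [InnerProductSpace ℝ E] {x y : E} (hxy : y ≠ x) (k : ℕ) :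
    DifferentiableAt ℝ (fun w => ‖x - w‖ ^ k) y :=
  (((differentiableAt_const x).sub differentiableAt_id).norm ℝ (sub_ne_zero.mpr hxy.symm)).pow k

theorem fderiv_norm_sub_pow_apply_sub [InnerProductSpace ℝ E] {x y : E} (hxy : y ≠ x) (k : ℕ) :
    fderiv ℝ (fun w => ‖x - w‖ ^ k) y (x - y) = -k * ‖x - y‖ ^ k := by
  have hline : HasDerivAt (fun t : ℝ => y + t • (x - y)) (x - y) 0 := by
    simpa using ((hasDerivAt_id (0 : ℝ)).smul_const (x - y)).const_add y
  have hcomp := (show HasFDerivAt _ _ (y + (0 : ℝ) • (x - y)) by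
    simpa using (differentiableAt_norm_sub_pow hxy k).hasFDerivAt).comp_hasDerivAt 0 hline
  exact hcomp.unique (hasDerivAt_norm_sub_add_smul_pow x y k)

theorem fderiv_const_add_norm_sub_pow_mul_ne_zero [InnerProductSpace ℝ E] {x y : E}
    (hxy : y ≠ x) {k : ℕ} (hk : k ≠ 0) (A : ℝ) {B : ℝ} (hB : B ≠ 0) :
    fderiv ℝ (fun w => A + ‖x - w‖ ^ k * B) y ≠ 0 := by
  rw [fderiv_const_add, fderiv_mul_const (differentiableAt_norm_sub_pow hxy k)]
  intro h
  have h_radial := congrArg (fun L => L (x - y)) h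
  simp only [smul_apply, fderiv_norm_sub_pow_apply_sub hxy, zero_apply, smul_eq_mul] at h_radial
  have hxy' : ‖x - y‖ ≠ 0 := norm_ne_zero_iff.mpr (sub_ne_zero.mpr hxy.symm)
  exact mul_ne_zero hB (mul_ne_zero (neg_ne_zero.mpr (Nat.cast_ne_zero.mpr hk))
    (pow_ne_zero k hxy')) h_radial

end NormPow

theorem stmt4_general (n : ℕ) (hn : 0 < n) (p : Fin n → E3) (ζ : Fin n → ℝ)
    (hζ : ζ ⟨0, hn⟩ ≠ 0)
    (x : E3) (hx : ∀ i : Fin n, i ≠ ⟨0, hn⟩ → x ≠ p i)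
    (F : E3 → ℝ)
    (hF : F = fun y => ∑ i, ζ i * ∏ ℓ ∈ Finset.univ.erase i,
      ‖x - Function.update p ⟨0, hn⟩ y ℓ‖ ^ 3) :
    ∀ y : E3, y ≠ x → F y = 0 → fderiv ℝ F y ≠ 0 := by
  set A := ζ ⟨0, hn⟩ * ∏ ℓ ∈ univ.erase ⟨0, hn⟩, ‖x - p ℓ‖ ^ 3
  set B := ∑ i ∈ univ.erase ⟨0, hn⟩, ζ i * ∏ ℓ ∈ (univ.erase i).erase ⟨0, hn⟩, ‖x - p ℓ‖ ^ 3
  have hF' : F = fun w => A + ‖x - w‖ ^ 3 * B := by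
    rw [hF]
    exact funext fun w => sum_mul_prod_erase_update ζ (fun q => ‖x - q‖ ^ 3) p _ w
  have hA : A ≠ 0 := mul_ne_zero hζ <| prod_ne_zero_iff.mpr fun ℓ hℓ =>
    pow_ne_zero _ <| norm_ne_zero_iff.mpr <| sub_ne_zero.mpr <| hx ℓ (ne_of_mem_erase hℓ)
  intro y hyx hFy
  have hB : B ≠ 0 := by
    rintro hB
    simp only [hF', hB, mul_zero, add_zero] at hFy
    exact hA hFy
  rw [hF']
  exact fderiv_const_add_norm_sub_pow_mul_ne_zero hyx three_ne_zero A hB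

/-- the genericity function `F(p₁) = ∑ i, ζ i ∏_{ℓ ≠ i} ‖x - p ℓ‖³`,
viewed as a function of the position `p₁` of the first charge, is a submersion at
every point of its zero set away from `x`. -/
theorem stmt4 (n : ℕ) (hn : 0 < n) (p : Fin n → E3) (ζ : Fin n → ℝ)
    (hζ : ζ ⟨0, hn⟩ ≠ 0)
    (hdist : ∀ i j : Fin n, i ≠ ⟨0, hn⟩ → j ≠ ⟨0, hn⟩ → p i = p j → i = j)
    (x : E3) (hx : ∀ i : Fin n, i ≠ ⟨0, hn⟩ → x ≠ p i)
    (F : E3 → ℝ)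
    (hF : F = fun y => ∑ i, ζ i * ∏ ℓ ∈ Finset.univ.erase i,
      ‖x - Function.update p ⟨0, hn⟩ y ℓ‖ ^ 3) :
    ∀ y : E3, y ≠ x → F y = 0 → fderiv ℝ F y ≠ 0 :=
  stmt4_general n hn p ζ hζ x hx F hF
end
end

section
/- Let N ≥ 3, β ∈ ℝ, R > 0, h > 0, and let V be the electrostatic potential of the 2N unit point charges at the vertices of the β-rotated prism, V(x_1,x_2,x_3) = V_0(x_1, x_2, x_3 + h/2) + V_0(x_1 cos β + x_2 sin β, −x_1 sin β + x_2 cos β, x_3 − h/2). Then the origin is a critical point of V; it is non-degenerate if and only if h ≠ √2·R; if h < √2·R the Hessian of V at the origin has exactly one negative eigenvalue (the origin is a 1-saddle), and if h > √2·R it has exactly two negative eigenvalues (the origin is a 2-saddle). -/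
/-! All `2N` charges lie on the sphere of radius `ρ = √(R² + (h/2)²)` about the origin, so the
gradient of `Σ ‖x - q k‖⁻¹` at `0` is `ρ⁻³ ⟪Σ q k, ·⟫` and its Hessian is
`ρ⁻⁵ (3 Σ ⟪q k, v⟫ ⟪q k, w⟫ - 2N ρ² ⟪v, w⟫)`. The vertices of a regular `N`-gon have vanishing
first moments and, for `N ≥ 3`, isotropic second moments in their plane (the sums of `cos 2θₖ`
and `sin 2θₖ` over its vertex angles `θₖ` vanish). Hence `Σ q k = 0`, and the Hessian is
`N (h² - 2R²) ρ⁻⁵ · diag(-1/2, -1/2, 1)` whatever `β` is: the vertical axis is the negative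
direction when `h < √2 R`, the horizontal plane when `h > √2 R`. -/

noncomputable section

open Finset

/-- The point `(a, b, c)` of `ℝ³`. -/
def pt (a b c : ℝ) : E3 := (WithLp.equiv 2 (Fin 3 → ℝ)).symm ![a, b, c]

/-- The vertices of a regular `N`-gon of circumradius `R` centered at the origin in
the plane `x₃ = 0`. -/
def vert (N : ℕ) (R : ℝ) (k : Fin N) : E3 :=
  pt (R * Real.cos (2 * Real.pi * (k : ℕ) / N)) (R * Real.sin (2 * Real.pi * (k : ℕ) / N)) 0

/-- The electrostatic potential of unit point charges at the vertices of the `N`-gon. -/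
def V0 (N : ℕ) (R : ℝ) : E3 → ℝ :=
  fun x => ∑ k : Fin N, 1 / ‖x - vert N R k‖

/-- The electrostatic potential of the `2N` unit point charges at the vertices of the
`β`-rotated prism of radius `R` and height `h`. -/
def Vprism (N : ℕ) (R h β : ℝ) : E3 → ℝ :=
  fun x => V0 N R (pt (x 0) (x 1) (x 2 + h / 2)) +
    V0 N R (pt (x 0 * Real.cos β + x 1 * Real.sin β)
      (-(x 0) * Real.sin β + x 1 * Real.cos β) (x 2 - h / 2))

/-- The Hessian of `f` at `x`, as a continuous bilinear form. -/
def hess (f : E3 → ℝ) (x : E3) : E3 →L[ℝ] E3 →L[ℝ] ℝ :=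
  fderiv ℝ (fderiv ℝ f) x

/-- Non-degeneracy of the Hessian of `f` at `x`. -/
def Nondeg (f : E3 → ℝ) (x : E3) : Prop :=
  ∀ v : E3, v ≠ 0 → hess f x v ≠ 0

/-- The Morse index of `f` at `x`: the maximal dimension of a subspace on which the
Hessian of `f` at `x` is negative definite (the number of negative eigenvalues). -/
def morseIndex (f : E3 → ℝ) (x : E3) : ℕ :=
  sSup {k : ℕ | ∃ W : Submodule ℝ E3, Module.finrank ℝ ↥W = k ∧
    ∀ v ∈ W, v ≠ 0 → hess f x v v < 0}

open Real Filter Topology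
open scoped RealInnerProductSpace

section Coulomb

variable {E : Type*} [NormedAddCommGroup E] [InnerProductSpace ℝ E] {p x : E}

theorem hasFDerivAt_norm_sub_rpow (s : ℝ) (hx : x ≠ p) :
    HasFDerivAt (fun y => ‖y - p‖ ^ s) ((s * ‖x - p‖ ^ (s - 2)) • innerSL ℝ (x - p)) x := by
  have h := ((hasFDerivAt_id x).sub_const p).norm_sq.rpow_const (p := s / 2)
    (Or.inl (pow_ne_zero 2 (norm_ne_zero_iff.2 (sub_ne_zero.2 hx))))
  have hsq : ∀ y : E, ∀ t : ℝ, (‖y - p‖ ^ 2) ^ t = ‖y - p‖ ^ (2 * t) := fun y t => by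
    rw [← rpow_natCast, ← rpow_mul (norm_nonneg _), Nat.cast_ofNat]
  simp only [id, hsq, ContinuousLinearMap.comp_id, ← Nat.cast_smul_eq_nsmul ℝ, smul_smul] at h
  convert h using 2 <;> ring_nf

variable {ι : Type*} [Fintype ι] {q : ι → E} {ρ : ℝ}

def coulombPotential (q : ι → E) (y : E) : ℝ := ∑ k, ‖y - q k‖⁻¹

def coulombDeriv (q : ι → E) (y : E) : E →L[ℝ] ℝ :=
  -∑ k, ‖y - q k‖ ^ (-3 : ℝ) • innerSL ℝ (y - q k)

theorem hasFDerivAt_coulombPotential (hx : ∀ k, x ≠ q k) :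
    HasFDerivAt (coulombPotential q) (coulombDeriv q x) x := by
  have h := HasFDerivAt.fun_sum (u := Finset.univ) fun k _ =>
    hasFDerivAt_norm_sub_rpow (-1) (hx k)
  simp only [rpow_neg_one] at h
  refine h.congr_fderiv ?_
  simp only [coulombDeriv, ← Finset.sum_neg_distrib]
  norm_num

theorem fderiv_coulombPotential_eventuallyEq (hx : ∀ k, x ≠ q k) :
    fderiv ℝ (coulombPotential q) =ᶠ[𝓝 x] coulombDeriv q := by
  filter_upwards [eventually_all.2 fun k => eventually_ne_nhds (hx k)] with y hy
  exact (hasFDerivAt_coulombPotential hy).fderiv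

theorem fderiv_fderiv_coulombPotential_apply (hx : ∀ k, x ≠ q k) (v w : E) :
    fderiv ℝ (fderiv ℝ (coulombPotential q)) x v w =
      ∑ k, (3 * ⟪x - q k, v⟫ * ⟪x - q k, w⟫ - ‖x - q k‖ ^ 2 * ⟪v, w⟫) / ‖x - q k‖ ^ 5 := by
  have h : HasFDerivAt (𝕜 := ℝ) (coulombDeriv q) _ x :=
    (HasFDerivAt.fun_sum (u := Finset.univ) fun k _ =>
      (hasFDerivAt_norm_sub_rpow (-3) (hx k)).fun_smul
        ((innerSL ℝ).hasFDerivAt.comp x ((hasFDerivAt_id x).sub_const (q k)))).fun_neg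
  rw [(fderiv_coulombPotential_eventuallyEq hx).fderiv_eq, h.fderiv]
  simp only [neg_apply, _root_.sum_apply, add_apply, FunLike.coe_smul, Pi.smul_apply,
    ContinuousLinearMap.comp_apply, ContinuousLinearMap.smulRight_apply,
    ContinuousLinearMap.id_apply, Function.comp_apply, id, smul_eq_mul, ← Finset.sum_neg_distrib]
  refine Finset.sum_congr rfl fun k _ => ?_
  have hk : ‖x - q k‖ ≠ 0 := norm_ne_zero_iff.2 (sub_ne_zero.2 (hx k))
  rw [innerSL_apply_apply, innerSL_apply_apply, innerSL_apply_apply]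
  norm_num
  field_simp
  ring

theorem fderiv_coulombPotential_zero (hq : ∀ k, ‖q k‖ = ρ) (hρ : ρ ≠ 0) :
    fderiv ℝ (coulombPotential q) 0 = (ρ ^ 3)⁻¹ • innerSL ℝ (∑ k, q k) := by
  have h0 : ∀ k, (0 : E) ≠ q k := fun k h => hρ (by rw [← hq k, ← h, norm_zero])
  rw [(hasFDerivAt_coulombPotential h0).fderiv, coulombDeriv, map_sum, Finset.smul_sum,
    ← Finset.sum_neg_distrib]
  refine Finset.sum_congr rfl fun k _ => ?_
  rw [zero_sub, norm_neg, hq k, map_neg, smul_neg, neg_neg]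
  norm_num

theorem fderiv_fderiv_coulombPotential_zero_apply (hq : ∀ k, ‖q k‖ = ρ) (hρ : ρ ≠ 0) (v w : E) :
    fderiv ℝ (fderiv ℝ (coulombPotential q)) 0 v w =
      (3 * ∑ k, ⟪q k, v⟫ * ⟪q k, w⟫ - Fintype.card ι * ρ ^ 2 * ⟪v, w⟫) / ρ ^ 5 := by
  have h0 : ∀ k, (0 : E) ≠ q k := fun k h => hρ (by rw [← hq k, ← h, norm_zero])
  simp [fderiv_fderiv_coulombPotential_apply h0, hq, ← Finset.sum_div, Finset.mul_sum, mul_assoc]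

end Coulomb

section RegularPolygon

theorem sum_exp_mul_angle_eq_zero {N m : ℕ} (hm : m ≠ 0) (hmN : m < N) (φ : ℝ) :
    ∑ k : Fin N, Complex.exp (↑(m * (2 * π * (k : ℕ) / N + φ)) * Complex.I) = 0 := by
  have hζ := Complex.isPrimitiveRoot_exp N (by omega)
  set ζ := Complex.exp (2 * π * Complex.I / N)
  have hterm : ∀ k : ℕ, Complex.exp (↑(m * (2 * π * k / N + φ)) * Complex.I) =
      Complex.exp (↑(m * φ) * Complex.I) * (ζ ^ m) ^ k := fun k => by
    rw [← pow_mul, ← Complex.exp_nat_mul, ← Complex.exp_add]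
    push_cast
    ring_nf
  simp only [hterm, ← Finset.mul_sum]
  rw [Fin.sum_univ_eq_sum_range (fun k => (ζ ^ m) ^ k),
    geom_sum_eq (hζ.pow_ne_one_of_pos_of_lt hm hmN), ← pow_mul, mul_comm m N, pow_mul,
    hζ.pow_eq_one]
  simp

theorem sum_cos_mul_angle_eq_zero {N m : ℕ} (hm : m ≠ 0) (hmN : m < N) (φ : ℝ) :
    ∑ k : Fin N, cos (m * (2 * π * (k : ℕ) / N + φ)) = 0 := by
  simpa [← Complex.exp_ofReal_mul_I_re] using
    congrArg Complex.re (sum_exp_mul_angle_eq_zero hm hmN φ)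

theorem sum_sin_mul_angle_eq_zero {N m : ℕ} (hm : m ≠ 0) (hmN : m < N) (φ : ℝ) :
    ∑ k : Fin N, sin (m * (2 * π * (k : ℕ) / N + φ)) = 0 := by
  simpa [← Complex.exp_ofReal_mul_I_im] using
    congrArg Complex.im (sum_exp_mul_angle_eq_zero hm hmN φ)

end RegularPolygon

@[simp] lemma pt_apply_zero (a b c : ℝ) : pt a b c 0 = a := rfl
@[simp] lemma pt_apply_one (a b c : ℝ) : pt a b c 1 = b := rfl
@[simp] lemma pt_apply_two (a b c : ℝ) : pt a b c 2 = c := rfl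

theorem inner_eq_E3 (v w : E3) : ⟪v, w⟫ = v 0 * w 0 + v 1 * w 1 + v 2 * w 2 := by
  simp [PiLp.inner_apply, Fin.sum_univ_three, mul_comm]

theorem norm_sq_eq_E3 (v : E3) : ‖v‖ ^ 2 = v 0 ^ 2 + v 1 ^ 2 + v 2 ^ 2 := by
  rw [← real_inner_self_eq_norm_sq, inner_eq_E3]
  ring

def ringPoint (N : ℕ) (R φ z : ℝ) (k : Fin N) : E3 :=
  pt (R * cos (2 * π * (k : ℕ) / N + φ)) (R * sin (2 * π * (k : ℕ) / N + φ)) z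

section RingPoint

variable {N : ℕ} {R φ z : ℝ}

theorem norm_ringPoint (k : Fin N) : ‖ringPoint N R φ z k‖ = √(R ^ 2 + z ^ 2) := by
  rw [← sqrt_sq (norm_nonneg _), norm_sq_eq_E3]
  congr 1
  simp only [ringPoint, pt_apply_zero, pt_apply_one, pt_apply_two]
  linear_combination R ^ 2 * cos_sq_add_sin_sq (2 * π * (k : ℕ) / N + φ)

theorem sum_ringPoint (hN : 2 ≤ N) : ∑ k, ringPoint N R φ z k = pt 0 0 (N * z) := by
  have hcos := sum_cos_mul_angle_eq_zero one_ne_zero hN φ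
  have hsin := sum_sin_mul_angle_eq_zero one_ne_zero hN φ
  simp only [Nat.cast_one, one_mul] at hcos hsin
  ext i
  fin_cases i <;> simp [ringPoint, ← mul_sum, hcos, hsin]

theorem sum_inner_ringPoint_mul_inner (hN : 3 ≤ N) (v w : E3) :
    ∑ k, ⟪ringPoint N R φ z k, v⟫ * ⟪ringPoint N R φ z k, w⟫ =
      N * (R ^ 2 / 2 * (v 0 * w 0 + v 1 * w 1) + z ^ 2 * (v 2 * w 2)) := by
  have hcos := sum_cos_mul_angle_eq_zero one_ne_zero (by omega : 1 < N) φ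
  have hsin := sum_sin_mul_angle_eq_zero one_ne_zero (by omega : 1 < N) φ
  have hcos2 := sum_cos_mul_angle_eq_zero two_ne_zero (by omega : 2 < N) φ
  have hsin2 := sum_sin_mul_angle_eq_zero two_ne_zero (by omega : 2 < N) φ
  simp only [Nat.cast_one, one_mul, Nat.cast_ofNat] at hcos hsin hcos2 hsin2
  -- in double-angle form every non-constant term sums to zero over the polygon
  have hterm : ∀ θ : ℝ, ⟪pt (R * cos θ) (R * sin θ) z, v⟫ * ⟪pt (R * cos θ) (R * sin θ) z, w⟫ =
      R ^ 2 / 2 * (v 0 * w 0 + v 1 * w 1) + z ^ 2 * (v 2 * w 2) +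
      R ^ 2 / 2 * (v 0 * w 0 - v 1 * w 1) * cos (2 * θ) +
      R ^ 2 / 2 * (v 0 * w 1 + v 1 * w 0) * sin (2 * θ) +
      R * z * (v 0 * w 2 + v 2 * w 0) * cos θ + R * z * (v 1 * w 2 + v 2 * w 1) * sin θ := by
    intro θ
    rw [inner_eq_E3, inner_eq_E3, cos_two_mul, sin_two_mul]
    simp only [pt_apply_zero, pt_apply_one, pt_apply_two]
    linear_combination R ^ 2 * v 1 * w 1 * sin_sq_add_cos_sq θ
  simp only [ringPoint, hterm, sum_add_distrib, ← mul_sum, hcos, hsin, hcos2, hsin2, sum_const,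
    card_univ, Fintype.card_fin, nsmul_eq_mul]
  ring

end RingPoint

-- `Vprism` evaluates `V0` at rotated, shifted arguments: its charges are the polygon at height
-- `-h/2` and the polygon rotated by `+β` at height `h/2`.
def prismVertex (N : ℕ) (R h β : ℝ) : Fin N ⊕ Fin N → E3 :=
  Sum.elim (ringPoint N R 0 (-(h / 2))) (ringPoint N R β (h / 2))

section Prism

variable {N : ℕ} {R h β : ℝ}

theorem Vprism_eq_coulombPotential : Vprism N R h β = coulombPotential (prismVertex N R h β) := by
  funext x
  simp only [Vprism, V0, coulombPotential, prismVertex, Fintype.sum_sum_type, Sum.elim_inl,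
    Sum.elim_inr, one_div]
  congr 1 <;> refine sum_congr rfl fun k _ => congr_arg Inv.inv ?_ <;>
    rw [← sqrt_sq (norm_nonneg (x - _)), ← sqrt_sq (norm_nonneg (pt _ _ _ - _)), norm_sq_eq_E3,
      norm_sq_eq_E3] <;>
    congr 1 <;>
    simp only [vert, ringPoint, PiLp.sub_apply, pt_apply_zero, pt_apply_one, pt_apply_two,
      add_zero, cos_add, sin_add]
  · ring
  · linear_combination (x 0 ^ 2 + x 1 ^ 2 - R ^ 2 * cos (2 * π * (k : ℕ) / N) ^ 2 -
      R ^ 2 * sin (2 * π * (k : ℕ) / N) ^ 2) * sin_sq_add_cos_sq β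

theorem norm_prismVertex (i : Fin N ⊕ Fin N) :
    ‖prismVertex N R h β i‖ = √(R ^ 2 + (h / 2) ^ 2) := by
  cases i <;> simp [prismVertex, norm_ringPoint]

theorem sum_prismVertex (hN : 2 ≤ N) : ∑ i, prismVertex N R h β i = 0 := by
  simp only [prismVertex, Fintype.sum_sum_type, Sum.elim_inl, Sum.elim_inr, sum_ringPoint hN]
  ext i
  fin_cases i <;> simp

theorem fderiv_Vprism_zero (hN : 2 ≤ N) (hR : 0 < R) : fderiv ℝ (Vprism N R h β) 0 = 0 := by
  rw [Vprism_eq_coulombPotential,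
    fderiv_coulombPotential_zero norm_prismVertex (by positivity), sum_prismVertex hN]
  simp

theorem hess_Vprism_zero (hN : 3 ≤ N) (hR : 0 < R) (v w : E3) :
    hess (Vprism N R h β) 0 v w = N / √(R ^ 2 + (h / 2) ^ 2) ^ 5 * (h ^ 2 - 2 * R ^ 2) *
      (v 2 * w 2 - (v 0 * w 0 + v 1 * w 1) / 2) := by
  have hρ : √(R ^ 2 + (h / 2) ^ 2) ^ 2 = R ^ 2 + (h / 2) ^ 2 := sq_sqrt (by positivity)
  rw [hess, Vprism_eq_coulombPotential,
    fderiv_fderiv_coulombPotential_zero_apply norm_prismVertex (by positivity),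
    Fintype.sum_sum_type]
  simp only [prismVertex, Sum.elim_inl, Sum.elim_inr, sum_inner_ringPoint_mul_inner hN,
    Fintype.card_sum, Fintype.card_fin, hρ]
  rw [inner_eq_E3]
  push_cast
  ring

end Prism

section MorseIndex

variable {f : E3 → ℝ} {x : E3}

theorem morseIndex_eq_finrank (K : Submodule ℝ E3)
    (hK : ∀ v ∈ K, v ≠ 0 → hess f x v v < 0) (hKperp : ∀ v ∈ Kᗮ, 0 ≤ hess f x v v) :
    morseIndex f x = Module.finrank ℝ K := by
  refine IsGreatest.csSup_eq ⟨⟨K, rfl, hK⟩, ?_⟩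
  rintro _ ⟨W, rfl, hW⟩
  have hdisj : W ⊓ Kᗮ = ⊥ := (Submodule.eq_bot_iff _).2 fun v ⟨hvW, hvK⟩ =>
    by_contra fun hv => (hW v hvW hv).not_ge (hKperp v hvK)
  have hW_sup := Submodule.finrank_sup_add_finrank_inf_eq W Kᗮ
  rw [hdisj, finrank_bot] at hW_sup
  have hK_sup := K.finrank_add_finrank_orthogonal
  have := Submodule.finrank_le (W ⊔ Kᗮ)
  omega

theorem sq_add_sq_add_sq_pos {v : E3} (hv : v ≠ 0) : 0 < v 0 ^ 2 + v 1 ^ 2 + v 2 ^ 2 := by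
  rw [← norm_sq_eq_E3]
  positivity

theorem mem_orthogonal_span_pt_zero_zero_one_iff {v : E3} : v ∈ (ℝ ∙ pt 0 0 1)ᗮ ↔ v 2 = 0 := by
  simp [Submodule.mem_orthogonal_singleton_iff_inner_right, inner_eq_E3]

theorem pt_zero_zero_one_ne_zero : pt 0 0 1 ≠ 0 := fun h => by
  simpa using congr_arg (· 2) h

variable {γ : ℝ}

theorem nondeg_iff_of_hess_eq
    (hf : ∀ v w, hess f x v w = γ * (v 2 * w 2 - (v 0 * w 0 + v 1 * w 1) / 2)) :
    Nondeg f x ↔ γ ≠ 0 := by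
  refine ⟨fun hnd hγ => hnd _ pt_zero_zero_one_ne_zero ?_, fun hγ v hv hv0 => ?_⟩
  · ext w
    simp [hf, hγ]
  -- pairing `v` with its image under diag(-1, -1, 2) gives a definite form
  have h := congr($hv0 (pt (-v 0) (-v 1) (2 * v 2)))
  rw [hf] at h
  simp only [pt_apply_zero, pt_apply_one, pt_apply_two, zero_apply] at h
  have := sq_add_sq_add_sq_pos hv
  have : γ * (v 0 ^ 2 + v 1 ^ 2 + 4 * v 2 ^ 2) = 0 := by linear_combination 2 * h
  rcases mul_eq_zero.1 this with h | h
  · exact hγ h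
  · nlinarith

theorem morseIndex_eq_one_of_hess_eq
    (hf : ∀ v w, hess f x v w = γ * (v 2 * w 2 - (v 0 * w 0 + v 1 * w 1) / 2))
    (hγ : γ < 0) : morseIndex f x = 1 := by
  rw [← finrank_span_singleton pt_zero_zero_one_ne_zero (K := ℝ)]
  refine morseIndex_eq_finrank _ (fun v hv hv0 => ?_) (fun v hv => ?_)
  · obtain ⟨c, rfl⟩ := Submodule.mem_span_singleton.1 hv
    have hc : c ≠ 0 := by rintro rfl; simp at hv0
    simp only [hf, PiLp.smul_apply, pt_apply_zero, pt_apply_one, pt_apply_two, smul_eq_mul]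
    nlinarith [sq_pos_of_ne_zero hc]
  · rw [hf, mem_orthogonal_span_pt_zero_zero_one_iff.1 hv]
    nlinarith [sq_nonneg (v 0), sq_nonneg (v 1)]

theorem morseIndex_eq_two_of_hess_eq
    (hf : ∀ v w, hess f x v w = γ * (v 2 * w 2 - (v 0 * w 0 + v 1 * w 1) / 2))
    (hγ : 0 < γ) : morseIndex f x = 2 := by
  have hdim := (ℝ ∙ pt 0 0 1).finrank_add_finrank_orthogonal
  rw [finrank_span_singleton pt_zero_zero_one_ne_zero, finrank_euclideanSpace_fin] at hdim
  rw [show 2 = Module.finrank ℝ (ℝ ∙ pt 0 0 1)ᗮ by omega]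
  refine morseIndex_eq_finrank _ (fun v hv hv0 => ?_) (fun v hv => ?_)
  · have hv2 := mem_orthogonal_span_pt_zero_zero_one_iff.1 hv
    have := sq_add_sq_add_sq_pos hv0
    rw [hv2] at this
    rw [hf, hv2]
    nlinarith
  · rw [Submodule.orthogonal_orthogonal] at hv
    obtain ⟨c, rfl⟩ := Submodule.mem_span_singleton.1 hv
    simp only [hf, PiLp.smul_apply, pt_apply_zero, pt_apply_one, pt_apply_two, smul_eq_mul]
    nlinarith [sq_nonneg c]

end MorseIndex

theorem sqrt_two_mul_eq_sqrt {R : ℝ} (hR : 0 ≤ R) : √2 * R = √(2 * R ^ 2) := by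
  rw [sqrt_mul zero_le_two, sqrt_sq hR]

theorem lt_sqrt_two_mul_iff {h R : ℝ} (hh : 0 ≤ h) (hR : 0 ≤ R) :
    h < √2 * R ↔ h ^ 2 < 2 * R ^ 2 := by
  rw [sqrt_two_mul_eq_sqrt hR, lt_sqrt hh]

theorem sqrt_two_mul_lt_iff {h R : ℝ} (hh : 0 ≤ h) (hR : 0 ≤ R) :
    √2 * R < h ↔ 2 * R ^ 2 < h ^ 2 := by
  rw [sqrt_two_mul_eq_sqrt hR, sqrt_lt (by positivity) hh]

/-- the origin is a critical point of the potential of the `β`-rotated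
prism; it is non-degenerate iff `h ≠ √2 R`; it is a 1-saddle when `h < √2 R`, and a
2-saddle when `h > √2 R`. -/
theorem stmt10 (N : ℕ) (hN : 3 ≤ N) (β R h : ℝ) (hR : 0 < R) (hh : 0 < h) :
    fderiv ℝ (Vprism N R h β) 0 = 0 ∧
    (Nondeg (Vprism N R h β) 0 ↔ h ≠ Real.sqrt 2 * R) ∧
    (h < Real.sqrt 2 * R →
      Nondeg (Vprism N R h β) 0 ∧ morseIndex (Vprism N R h β) 0 = 1) ∧
    (Real.sqrt 2 * R < h →
      Nondeg (Vprism N R h β) 0 ∧ morseIndex (Vprism N R h β) 0 = 2) := by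
  have hf := hess_Vprism_zero (h := h) (β := β) hN hR
  set c : ℝ := N / √(R ^ 2 + (h / 2) ^ 2) ^ 5
  have hc : 0 < c := div_pos (by exact_mod_cast (by omega : 0 < N)) (by positivity)
  have hneg : c * (h ^ 2 - 2 * R ^ 2) < 0 ↔ h < √2 * R := by
    rw [lt_sqrt_two_mul_iff hh.le hR.le, ← neg_pos, ← mul_neg, mul_pos_iff_of_pos_left hc,
      neg_pos, sub_neg]
  have hpos : 0 < c * (h ^ 2 - 2 * R ^ 2) ↔ √2 * R < h := by
    rw [sqrt_two_mul_lt_iff hh.le hR.le, mul_pos_iff_of_pos_left hc, sub_pos]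
  have hnd := nondeg_iff_of_hess_eq hf
  refine ⟨fderiv_Vprism_zero (by omega) hR, ?_, fun hlt => ?_, fun hgt => ?_⟩
  · rw [hnd, ne_iff_lt_or_gt, ne_iff_lt_or_gt, hneg, hpos]
  · exact ⟨hnd.2 (hneg.2 hlt).ne, morseIndex_eq_one_of_hess_eq hf (hneg.2 hlt)⟩
  · exact ⟨hnd.2 (hpos.2 hgt).ne', morseIndex_eq_two_of_hess_eq hf (hpos.2 hgt)⟩
end
end

section
/- Let N ≥ 3, α = 2π/N, R > 0, and 0 < h < √2·R. Let V be the electrostatic potential of the 2N unit point charges at the vertices A_ℓ = (R cos(ℓα + α/4), R sin(ℓα + α/4), h/2) and B_ℓ = (R cos(ℓα + α/4), −R sin(ℓα + α/4), −h/2), ℓ = 1, …, N, of an N-sided anti-prism. Then there exists t ∈ (0, 1) such that ∇V(t·R cos(α/4), 0, 0) = 0; that is, there is an equilibrium on the open line segment joining the center of the anti-prism to the midpoint (R cos(α/4), 0, 0) of the lateral edge connecting A_N and B_N (and, by symmetry, on each of the segments joining the center to the midpoints of the lateral edges). -/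
/-!
The half-turn about the `x`-axis swaps `A_ℓ` and `B_ℓ`, so on that axis the contributions of
each pair to `∇V` perpendicular to the axis cancel, and `∇V (u, 0, 0) = -2 F(u) e₁` for an
explicit function `F` of one variable. Because `∑ cos θ_ℓ = 0` we get `F(0) = 0`,
and because `∑ cos² θ_ℓ = N / 2` we get `F'(0) = N (h²/4 - R²/2) / (R² + h²/4)^(5/2) < 0`.
At the edge midpoint `u = R cos(α/4)` every vertex has abscissa at most `u`, so `F(u) > 0`.
The intermediate value theorem gives a zero of `F` in between.
-/

noncomputable section

open Finset

/-- The top vertices of the `N`-sided anti-prism of circumradius `R` and height `h`: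
`A_ℓ = (R cos(ℓα + α/4), R sin(ℓα + α/4), h/2)` with `α = 2π/N`. -/
def Avert (N : ℕ) (R h : ℝ) (ℓ : Fin N) : E3 :=
  pt (R * Real.cos ((ℓ : ℕ) * (2 * Real.pi / N) + (2 * Real.pi / N) / 4))
    (R * Real.sin ((ℓ : ℕ) * (2 * Real.pi / N) + (2 * Real.pi / N) / 4)) (h / 2)

/-- The bottom vertices of the `N`-sided anti-prism:
`B_ℓ = (R cos(ℓα + α/4), -R sin(ℓα + α/4), -h/2)` with `α = 2π/N`. -/
def Bvert (N : ℕ) (R h : ℝ) (ℓ : Fin N) : E3 :=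
  pt (R * Real.cos ((ℓ : ℕ) * (2 * Real.pi / N) + (2 * Real.pi / N) / 4))
    (-(R * Real.sin ((ℓ : ℕ) * (2 * Real.pi / N) + (2 * Real.pi / N) / 4))) (-(h / 2))

/-- The electrostatic potential of unit point charges at the `2N` vertices of the
anti-prism. -/
def Vanti (N : ℕ) (R h : ℝ) : E3 → ℝ :=
  fun x => ∑ ℓ : Fin N, (1 / ‖x - Avert N R h ℓ‖ + 1 / ‖x - Bvert N R h ℓ‖)

open Real Set Topology

lemma hasFDerivAt_one_div_norm_sub {F : Type*} [NormedAddCommGroup F] [InnerProductSpace ℝ F]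
    {v p : F} (hp : p ≠ v) :
    HasFDerivAt (fun x => 1 / ‖x - v‖) (-(‖p - v‖ ^ 3)⁻¹ • innerSL ℝ (p - v)) p := by
  have hd : ‖p - v‖ ≠ 0 := norm_ne_zero_iff.2 (sub_ne_zero.2 hp)
  have h := (hasDerivAt_inv (by positivity)).comp_hasFDerivAt p
    (((hasFDerivAt_id p).sub_const v).norm_sq.sqrt (by positivity))
  simp only [Function.comp_def, id, sqrt_sq (norm_nonneg _)] at h
  simp only [one_div]
  refine h.congr_fderiv ?_
  ext x
  simp
  field_simp

lemma hasFDerivAt_one_div_norm_sub_add {F : Type*} [NormedAddCommGroup F]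
    [InnerProductSpace ℝ F] {v w p : F} {d : ℝ} (hv : ‖p - v‖ = d) (hw : ‖p - w‖ = d)
    (hd : d ≠ 0) :
    HasFDerivAt (fun x => 1 / ‖x - v‖ + 1 / ‖x - w‖)
      (-(d ^ 3)⁻¹ • innerSL ℝ ((p - v) + (p - w))) p := by
  have hpv : p ≠ v := fun h => hd (by rw [← hv, h, sub_self, norm_zero])
  have hpw : p ≠ w := fun h => hd (by rw [← hw, h, sub_self, norm_zero])
  have h := (hasFDerivAt_one_div_norm_sub hpv).add (hasFDerivAt_one_div_norm_sub hpw)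
  rwa [hv, hw, ← smul_add, ← map_add] at h

lemma hasDerivAt_div_sqrt_sq_add_pow_three {c : ℝ} (hc : 0 < c) (w : ℝ) :
    HasDerivAt (fun w => w / √(w ^ 2 + c) ^ 3) ((c - 2 * w ^ 2) / √(w ^ 2 + c) ^ 5) w := by
  have hq : 0 < w ^ 2 + c := by positivity
  have hs : 0 < √(w ^ 2 + c) := sqrt_pos.2 hq
  have h := (hasDerivAt_id w).div
    ((((hasDerivAt_pow 2 w).add_const c).sqrt hq.ne').pow 3) (pow_ne_zero 3 hs.ne')
  refine HasDerivAt.congr_deriv (f := fun w => w / √(w ^ 2 + c) ^ 3) h ?_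
  have hss : √(w ^ 2 + c) ^ 2 = w ^ 2 + c := sq_sqrt hq.le
  have hs4 : √(w ^ 2 + c) ^ 4 = (w ^ 2 + c) ^ 2 := by
    rw [show (4 : ℕ) = 2 * 2 from rfl, pow_mul, hss]
  simp only [Pi.pow_apply, id]
  field_simp
  rw [hs4, hss]
  ring

lemma exists_mem_Ioo_eq_zero_of_hasDerivAt_neg {f : ℝ → ℝ} {f' a b : ℝ} (hab : a < b)
    (hf : ContinuousOn f (Icc a b)) (hfa : f a = 0) (hf' : HasDerivAt f f' a) (hneg : f' < 0)
    (hfb : 0 < f b) : ∃ x ∈ Ioo a b, f x = 0 := by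
  have hslope : ∀ᶠ x in 𝓝[>] a, slope f a x < 0 :=
    (hf'.tendsto_slope.mono_left (nhdsGT_le_nhdsNE a)).eventually (eventually_lt_nhds hneg)
  obtain ⟨x, hsx, hx⟩ := (hslope.and (Ioo_mem_nhdsGT hab)).exists
  have hfx : f x < 0 := by
    rw [slope_def_field, hfa, sub_zero] at hsx
    exact neg_of_div_neg_left hsx (sub_pos.2 hx.1).le
  obtain ⟨y, hy, hfy⟩ := intermediate_value_Ioo hx.2.le (hf.mono (Icc_subset_Icc_left hx.1.le))
    ⟨hfx, hfb⟩
  exact ⟨y, ⟨hx.1.trans hy.1, hy.2⟩, hfy⟩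

/-- Up to the factor `-2`, the `x`-component of `∇V` at `(u, 0, 0)` for pairs of unit charges
placed symmetrically about the `x`-axis, at abscissa `a i` and squared distance `c i` from it. -/
def axialField {ι : Type*} [Fintype ι] (a c : ι → ℝ) (u : ℝ) : ℝ :=
  ∑ i, (u - a i) / √((u - a i) ^ 2 + c i) ^ 3

section axialField

variable {ι : Type*} [Fintype ι] {a c : ι → ℝ}

lemma hasDerivAt_axialField (hc : ∀ i, 0 < c i) (u : ℝ) :
    HasDerivAt (axialField a c)
      (∑ i, (c i - 2 * (u - a i) ^ 2) / √((u - a i) ^ 2 + c i) ^ 5) u :=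
  HasDerivAt.fun_sum fun i _ =>
    (hasDerivAt_div_sqrt_sq_add_pow_three (hc i) (u - a i)).comp_sub_const u (a i)

lemma continuous_axialField (hc : ∀ i, 0 < c i) : Continuous (axialField a c) :=
  continuous_iff_continuousAt.2 fun u => (hasDerivAt_axialField hc u).continuousAt

lemma axialField_zero {ρ : ℝ} (hρ : ∀ i, a i ^ 2 + c i = ρ) :
    axialField a c 0 = -(∑ i, a i) / √ρ ^ 3 := by
  simp only [axialField, zero_sub, neg_sq, hρ, sum_div, neg_div, sum_neg_distrib]

lemma hasDerivAt_axialField_zero (hc : ∀ i, 0 < c i) {ρ : ℝ} (hρ : ∀ i, a i ^ 2 + c i = ρ) :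
    HasDerivAt (axialField a c) ((Fintype.card ι * ρ - 3 * ∑ i, a i ^ 2) / √ρ ^ 5) 0 := by
  refine (hasDerivAt_axialField hc 0).congr_deriv ?_
  have hterm : ∀ i, (c i - 2 * (0 - a i) ^ 2) / √((0 - a i) ^ 2 + c i) ^ 5
      = (ρ - 3 * a i ^ 2) / √ρ ^ 5 := fun i => by
    rw [zero_sub, neg_sq, hρ, show c i = ρ - a i ^ 2 by linarith [hρ i]]
    ring
  simp only [hterm, ← sum_div, sum_sub_distrib, ← mul_sum, sum_const, card_univ, nsmul_eq_mul]

lemma axialField_pos (hc : ∀ i, 0 < c i) {u : ℝ} (hle : ∀ i, a i ≤ u) (hlt : ∃ i, a i < u) :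
    0 < axialField a c u := by
  have hden : ∀ i, 0 < √((u - a i) ^ 2 + c i) ^ 3 := fun i => by
    have := hc i
    positivity
  obtain ⟨i, hi⟩ := hlt
  exact sum_pos' (fun j _ => div_nonneg (sub_nonneg.2 (hle j)) (hden j).le)
    ⟨i, mem_univ i, div_pos (sub_pos.2 hi) (hden i)⟩

end axialField

lemma sum_cos_mul_two_pi_div_add (N k : ℕ) (hk : ¬ N ∣ k) (φ : ℝ) :
    ∑ ℓ : Fin N, cos (ℓ * (k * (2 * π / N)) + φ) = 0 := by
  rcases Nat.eq_zero_or_pos N with rfl | hN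
  · simp
  have hζ := Complex.isPrimitiveRoot_exp N hN.ne'
  set z := Complex.exp (2 * π * Complex.I / N) ^ k
  have hz1 : z ≠ 1 := by rwa [Ne, hζ.pow_eq_one_iff_dvd]
  have hzN : z ^ N = 1 := by rw [pow_right_comm, hζ.pow_eq_one, one_pow]
  have hterm : ∀ ℓ : ℕ, Complex.exp (φ * Complex.I) * z ^ ℓ
      = Complex.exp ((ℓ * (k * (2 * π / N)) + φ : ℝ) * Complex.I) := fun ℓ => by
    rw [← pow_mul, ← Complex.exp_nat_mul, ← Complex.exp_add]
    push_cast
    ring_nf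
  have hsum : ∑ ℓ ∈ range N, Complex.exp (φ * Complex.I) * z ^ ℓ = 0 := by
    rw [← mul_sum, geom_sum_eq hz1, hzN, sub_self, zero_div, mul_zero]
  simp only [hterm] at hsum
  rw [Fin.sum_univ_eq_sum_range (fun ℓ : ℕ => cos (ℓ * (k * (2 * π / N)) + φ))]
  simpa only [Complex.re_sum, Complex.exp_ofReal_mul_I_re, Complex.zero_re]
    using congrArg Complex.re hsum

lemma cos_mul_add_quarter_lt {α x : ℝ} (hα : 0 < α) (hx : 0 < x) (hxα : (x + 1) * α ≤ 2 * π) :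
    cos (x * α + α / 4) < cos (α / 4) := by
  have h1 : 0 < sin (x * α / 2) := sin_pos_of_pos_of_lt_pi (by positivity) (by nlinarith)
  have h2 : 0 < sin (x * α / 2 + α / 4) :=
    sin_pos_of_pos_of_lt_pi (by positivity) (by nlinarith)
  have hdiff : cos (α / 4) - cos (x * α + α / 4)
      = 2 * sin (x * α / 2 + α / 4) * sin (x * α / 2) := by
    rw [cos_sub_cos, show (α / 4 - (x * α + α / 4)) / 2 = -(x * α / 2) by ring, sin_neg]
    ring_nf
  nlinarith

def vertexAngle (N : ℕ) (ℓ : Fin N) : ℝ := (ℓ : ℕ) * (2 * π / N) + (2 * π / N) / 4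

lemma sum_cos_vertexAngle {N : ℕ} (hN : N ≠ 1) : ∑ ℓ, cos (vertexAngle N ℓ) = 0 := by
  simpa [vertexAngle] using sum_cos_mul_two_pi_div_add N 1 (by simpa using hN) ((2 * π / N) / 4)

lemma sum_cos_vertexAngle_sq {N : ℕ} (hN : 3 ≤ N) :
    ∑ ℓ, cos (vertexAngle N ℓ) ^ 2 = N / 2 := by
  have h := sum_cos_mul_two_pi_div_add N 2 (Nat.not_dvd_of_pos_of_lt two_pos hN)
    ((2 * π / N) / 2)
  have hsq : ∀ ℓ : Fin N, cos (vertexAngle N ℓ) ^ 2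
      = 1 / 2 + cos (ℓ * ((2 : ℕ) * (2 * π / N)) + (2 * π / N) / 2) / 2 := fun ℓ => by
    rw [cos_sq, vertexAngle]
    push_cast
    ring_nf
  simp only [hsq, sum_add_distrib, ← sum_div, h, sum_const, card_univ, Fintype.card_fin,
    nsmul_eq_mul]
  ring

lemma cos_vertexAngle_lt {N : ℕ} {ℓ : Fin N} (hℓ : 0 < (ℓ : ℕ)) :
    cos (vertexAngle N ℓ) < cos ((2 * π / N) / 4) := by
  have hN : (0 : ℝ) < N := by exact_mod_cast ℓ.pos
  refine cos_mul_add_quarter_lt (by positivity) (by exact_mod_cast hℓ) ?_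
  have : ((ℓ : ℕ) : ℝ) + 1 ≤ N := by exact_mod_cast ℓ.isLt
  calc ((ℓ : ℕ) + 1) * (2 * π / N) ≤ N * (2 * π / N) := by gcongr
    _ = 2 * π := by field_simp

lemma cos_vertexAngle_le {N : ℕ} (ℓ : Fin N) :
    cos (vertexAngle N ℓ) ≤ cos ((2 * π / N) / 4) := by
  rcases Nat.eq_zero_or_pos (ℓ : ℕ) with h0 | hpos
  · simp [vertexAngle, h0]
  · exact (cos_vertexAngle_lt hpos).le

lemma cos_two_pi_div_div_four_pos {N : ℕ} (hN : 2 ≤ N) : 0 < cos ((2 * π / N) / 4) := by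
  have hN' : (2 : ℝ) ≤ N := by exact_mod_cast hN
  refine cos_pos_of_mem_Ioo ⟨by linarith [pi_pos, show 0 < 2 * π / N / 4 by positivity], ?_⟩
  rw [div_div, div_lt_iff₀ (by positivity)]
  nlinarith [pi_pos]

lemma pt_sub (x y z x' y' z' : ℝ) : pt x y z - pt x' y' z' = pt (x - x') (y - y') (z - z') := by
  ext i
  fin_cases i <;> simp [pt]

lemma norm_pt (x y z : ℝ) : ‖pt x y z‖ = √(x ^ 2 + y ^ 2 + z ^ 2) := by
  simp [EuclideanSpace.norm_eq, pt, Fin.sum_univ_three, add_assoc]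

section antiprism

variable {N : ℕ} {R h : ℝ}

lemma Avert_eq (ℓ : Fin N) :
    Avert N R h ℓ = pt (R * cos (vertexAngle N ℓ)) (R * sin (vertexAngle N ℓ)) (h / 2) := rfl

lemma Bvert_eq (ℓ : Fin N) :
    Bvert N R h ℓ = pt (R * cos (vertexAngle N ℓ)) (-(R * sin (vertexAngle N ℓ))) (-(h / 2)) :=
  rfl

lemma norm_pt_sub_Avert (u : ℝ) (ℓ : Fin N) : ‖pt u 0 0 - Avert N R h ℓ‖ =
    √((u - R * cos (vertexAngle N ℓ)) ^ 2 + ((R * sin (vertexAngle N ℓ)) ^ 2 + (h / 2) ^ 2)) := by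
  rw [Avert_eq, pt_sub, norm_pt]
  ring_nf

lemma norm_pt_sub_Bvert (u : ℝ) (ℓ : Fin N) : ‖pt u 0 0 - Bvert N R h ℓ‖ =
    √((u - R * cos (vertexAngle N ℓ)) ^ 2 + ((R * sin (vertexAngle N ℓ)) ^ 2 + (h / 2) ^ 2)) := by
  rw [Bvert_eq, pt_sub, norm_pt]
  ring_nf

lemma pt_sub_Avert_add_pt_sub_Bvert (u : ℝ) (ℓ : Fin N) :
    (pt u 0 0 - Avert N R h ℓ) + (pt u 0 0 - Bvert N R h ℓ)
      = (2 * (u - R * cos (vertexAngle N ℓ))) • pt 1 0 0 := by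
  rw [Avert_eq, Bvert_eq, pt_sub, pt_sub]
  ext i
  fin_cases i <;> simp [pt, two_mul]

lemma hasFDerivAt_Vanti_pt (hh : h ≠ 0) (u : ℝ) :
    HasFDerivAt (Vanti N R h)
      ((-2 * axialField (fun ℓ => R * cos (vertexAngle N ℓ))
          (fun ℓ => (R * sin (vertexAngle N ℓ)) ^ 2 + (h / 2) ^ 2) u) • innerSL ℝ (pt 1 0 0))
      (pt u 0 0) := by
  have hterm : ∀ ℓ : Fin N, HasFDerivAt
      (fun x => 1 / ‖x - Avert N R h ℓ‖ + 1 / ‖x - Bvert N R h ℓ‖)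
      ((-2 * ((u - R * cos (vertexAngle N ℓ)) / √((u - R * cos (vertexAngle N ℓ)) ^ 2
        + ((R * sin (vertexAngle N ℓ)) ^ 2 + (h / 2) ^ 2)) ^ 3)) • innerSL ℝ (pt 1 0 0))
      (pt u 0 0) := fun ℓ => by
    have hpair := hasFDerivAt_one_div_norm_sub_add (norm_pt_sub_Avert (R := R) (h := h) u ℓ)
      (norm_pt_sub_Bvert u ℓ) (sqrt_ne_zero'.2 (by positivity))
    rw [pt_sub_Avert_add_pt_sub_Bvert, map_smul, smul_smul] at hpair
    refine hpair.congr_fderiv (congrArg (· • _) ?_)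
    ring
  refine (HasFDerivAt.fun_sum fun ℓ (_ : ℓ ∈ Finset.univ) => hterm ℓ).congr_fderiv ?_
  rw [axialField, mul_sum, sum_smul]

lemma sq_add_sq_sin_add (ℓ : Fin N) :
    (R * cos (vertexAngle N ℓ)) ^ 2 + ((R * sin (vertexAngle N ℓ)) ^ 2 + (h / 2) ^ 2)
      = R ^ 2 + (h / 2) ^ 2 := by
  linear_combination R ^ 2 * cos_sq_add_sin_sq (vertexAngle N ℓ)

lemma axialField_antiprism_zero (hN : N ≠ 1) :
    axialField (fun ℓ => R * cos (vertexAngle N ℓ))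
      (fun ℓ => (R * sin (vertexAngle N ℓ)) ^ 2 + (h / 2) ^ 2) 0 = 0 := by
  rw [axialField_zero sq_add_sq_sin_add, ← mul_sum, sum_cos_vertexAngle hN]
  simp

lemma hasDerivAt_axialField_antiprism_zero (hN : 3 ≤ N) (hh : h ≠ 0) :
    HasDerivAt (axialField (fun ℓ => R * cos (vertexAngle N ℓ))
        (fun ℓ => (R * sin (vertexAngle N ℓ)) ^ 2 + (h / 2) ^ 2))
      (N * ((h / 2) ^ 2 - R ^ 2 / 2) / √(R ^ 2 + (h / 2) ^ 2) ^ 5) 0 := by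
  refine (hasDerivAt_axialField_zero (fun ℓ => by positivity) sq_add_sq_sin_add).congr_deriv ?_
  simp only [mul_pow, ← mul_sum, sum_cos_vertexAngle_sq hN, Fintype.card_fin]
  ring

lemma axialField_antiprism_pos (hN : 2 ≤ N) (hR : 0 < R) (hh : h ≠ 0) :
    0 < axialField (fun ℓ => R * cos (vertexAngle N ℓ))
      (fun ℓ => (R * sin (vertexAngle N ℓ)) ^ 2 + (h / 2) ^ 2) (R * cos ((2 * π / N) / 4)) := by
  refine axialField_pos (fun ℓ => by positivity)
    (fun ℓ => mul_le_mul_of_nonneg_left (cos_vertexAngle_le ℓ) hR.le)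
    ⟨⟨1, hN⟩, mul_lt_mul_of_pos_left (cos_vertexAngle_lt one_pos) hR⟩

end antiprism

/-- if `0 < h < √2 R`, then there is an equilibrium of the anti-prism
potential on the open segment joining the center to the midpoint
`(R cos(α/4), 0, 0)` of a lateral edge. -/
theorem stmt12 (N : ℕ) (hN : 3 ≤ N) (R h : ℝ) (hR : 0 < R) (hh : 0 < h)
    (hcrit : h < Real.sqrt 2 * R) :
    ∃ t ∈ Set.Ioo (0 : ℝ) 1,
      fderiv ℝ (Vanti N R h)
        (pt (t * (R * Real.cos ((2 * Real.pi / N) / 4))) 0 0) = 0 := by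
  have hM : 0 < R * cos ((2 * π / N) / 4) := mul_pos hR (cos_two_pi_div_div_four_pos (by omega))
  have hslope : N * ((h / 2) ^ 2 - R ^ 2 / 2) / √(R ^ 2 + (h / 2) ^ 2) ^ 5 < 0 := by
    have : h ^ 2 < 2 * R ^ 2 := by
      simpa [mul_pow] using pow_lt_pow_left₀ hcrit hh.le two_ne_zero
    exact div_neg_of_neg_of_pos (mul_neg_of_pos_of_neg (by positivity) (by linarith))
      (pow_pos (sqrt_pos.2 (by positivity)) 5)
  obtain ⟨u, hu, hu0⟩ := exists_mem_Ioo_eq_zero_of_hasDerivAt_neg hM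
    (continuous_axialField fun ℓ => by positivity).continuousOn
    (axialField_antiprism_zero (by omega)) (hasDerivAt_axialField_antiprism_zero hN hh.ne')
    hslope (axialField_antiprism_pos (by omega) hR hh.ne')
  refine ⟨u / (R * cos ((2 * π / N) / 4)), ⟨div_pos hu.1 hM, (div_lt_one hM).2 hu.2⟩, ?_⟩
  rw [div_mul_cancel₀ u hM.ne', (hasFDerivAt_Vanti_pt hh.ne' u).fderiv, hu0, mul_zero, zero_smul]
end
end

section
/- Let A_1, …, A_n be distinct points in ℝ³ with charges ζ_1, …, ζ_n > 0, let p ≥ 1 be a real number, and let V_p(x) = Σ_{i=1}^n (ζ_i/‖x − A_i‖)^p on ℝ³ ∖ {A_1, …, A_n}. Then V_p has no local maximum: no point x of the domain admits a neighbourhood U with V_p(y) ≤ V_p(x) for all y ∈ U. -/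
/-!
At a local maximum `x` of `V_p`, `V_p ≤ V_p x` on a small closed ball `B` around `x`. By Newton's
theorem the harmonic function `y ↦ ‖y - a‖⁻¹` has mean value over `B` equal to its value at the
centre whenever `a ∉ B`; with Jensen's inequality for the convex map `t ↦ t ^ p` this makes `V_p`
sub-mean-valued, so `V_p = V_p x` on the interior of `B`. As `V_p` is real analytic on the connected
set `ℝ³ ∖ {A_1, …, A_n}`, it is then constant there, which is absurd since it blows up at each
charge.
-/

noncomputable section

open Finset

def Vp {n : ℕ} (A : Fin n → E3) (ζ : Fin n → ℝ) (p : ℝ) : E3 → ℝ :=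
  fun x => ∑ i, ζ i ^ p / ‖x - A i‖ ^ p

open Real Set MeasureTheory Metric Filter Topology

lemma integral_inv_sqrt_add_sq {a Q : ℝ} (ha : 0 < a) (hQ : 0 ≤ Q) :
    ∫ v in (0 : ℝ)..Q, (√(v + a ^ 2))⁻¹ = 2 * √(Q + a ^ 2) - 2 * a := by
  have hpos : ∀ v ∈ uIcc 0 Q, 0 < v + a ^ 2 := fun v hv => by
    rw [Set.uIcc_of_le hQ] at hv; nlinarith [hv.1]
  have hderiv : ∀ v ∈ uIcc 0 Q,
      HasDerivAt (fun v => 2 * √(v + a ^ 2)) (√(v + a ^ 2))⁻¹ v := fun v hv => by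
    refine ((((hasDerivAt_id' v).add_const (a ^ 2)).sqrt (hpos v hv).ne').const_mul 2
      ).congr_deriv ?_
    field_simp
  have hcont : ContinuousOn (fun v => (√(v + a ^ 2))⁻¹) (uIcc 0 Q) :=
    (continuous_sqrt.comp (continuous_add_const _)).continuousOn.inv₀
      fun v hv => (sqrt_pos.mpr (hpos v hv)).ne'
  rw [intervalIntegral.integral_eq_sub_of_hasDerivAt hderiv hcont.intervalIntegrable,
    zero_add, sqrt_sq ha.le]

lemma integral_two_mul_sqrt_sub {s d : ℝ} (hs : 0 < s) (hsd : s < d) :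
    ∫ t in (-s)..s, (2 * √(s ^ 2 + d ^ 2 - 2 * d * t) - 2 * (d - t)) = 4 * s ^ 3 / (3 * d) := by
  have hd : 0 < d := hs.trans hsd
  have hderiv : ∀ t ∈ uIcc (-s) s,
      HasDerivAt (fun t => -(2 / (3 * d)) * ((s ^ 2 + d ^ 2 - 2 * d * t) *
          √(s ^ 2 + d ^ 2 - 2 * d * t)) - (2 * d * t - t ^ 2))
        (2 * √(s ^ 2 + d ^ 2 - 2 * d * t) - 2 * (d - t)) t := by
    intro t ht
    rw [Set.uIcc_of_le (by linarith)] at ht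
    have hc : 0 < s ^ 2 + d ^ 2 - 2 * d * t := by nlinarith [ht.1, ht.2]
    have hlin : HasDerivAt (fun t : ℝ => s ^ 2 + d ^ 2 - 2 * d * t) (-(2 * d)) t := by
      simpa using ((hasDerivAt_id' t).const_mul (2 * d)).const_sub (s ^ 2 + d ^ 2)
    have hpoly : HasDerivAt (fun t : ℝ => 2 * d * t - t ^ 2) (2 * d - 2 * t) t := by
      simpa using ((hasDerivAt_id' t).const_mul (2 * d)).fun_sub ((hasDerivAt_id' t).fun_pow 2)
    refine (((hlin.mul (hlin.sqrt hc.ne')).const_mul (-(2 / (3 * d)))).sub hpoly).congr_deriv ?_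
    have hsq := sq_sqrt hc.le
    field_simp
    nlinarith [hsq]
  have hcont : ContinuousOn (fun t => 2 * √(s ^ 2 + d ^ 2 - 2 * d * t) - 2 * (d - t))
      (uIcc (-s) s) := by fun_prop
  rw [intervalIntegral.integral_eq_sub_of_hasDerivAt hderiv hcont.intervalIntegrable,
    show s ^ 2 + d ^ 2 - 2 * d * s = (d - s) ^ 2 by ring,
    show s ^ 2 + d ^ 2 - 2 * d * -s = (d + s) ^ 2 by ring,
    sqrt_sq (by linarith), sqrt_sq (by linarith)]
  field_simp
  ring

lemma integral_comp_sq_add_sq (H : ℝ → ℝ) :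
    ∫ u : ℝ × ℝ, H (u.1 ^ 2 + u.2 ^ 2) = π * ∫ v in Ioi 0, H v := by
  have hpolar : ∀ q : ℝ × ℝ, (polarCoord.symm q).1 ^ 2 + (polarCoord.symm q).2 ^ 2 = q.1 ^ 2 :=
    fun q => by
      simp only [polarCoord_symm_apply]
      linear_combination q.1 ^ 2 * cos_sq_add_sin_sq q.2
  have hsubst : ∫ r in Ioi (0 : ℝ), r * H (r ^ 2) = (∫ v in Ioi 0, H v) / 2 := by
    have := integral_comp_rpow_Ioi H (p := 2) two_ne_zero
    simp only [smul_eq_mul, abs_two, rpow_two] at this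
    norm_num at this
    rw [← this, ← integral_div]
    refine setIntegral_congr_fun measurableSet_Ioi fun r _ => ?_
    ring
  rw [← integral_comp_polarCoord_symm, polarCoord_target, Measure.volume_eq_prod,
    ← Measure.prod_restrict]
  simp_rw [hpolar, smul_eq_mul]
  have := integral_prod_mul (μ := volume.restrict (Ioi (0:ℝ))) (ν := volume.restrict (Ioo (-π) π))
    (fun r => r * H (r ^ 2)) (fun _ => (1 : ℝ))
  simp only [mul_one] at this
  rw [this, hsubst, setIntegral_const, Real.volume_real_Ioo_of_le (by linarith [pi_pos])]
  simp only [smul_eq_mul, mul_one]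
  ring

/-- `y ↦ (y 0, (y 1, y 2))`. -/
def axialCoord : E3 ≃ᵐ ℝ × (ℝ × ℝ) :=
  (MeasurableEquiv.toLp 2 (Fin 3 → ℝ)).symm.trans
    ((MeasurableEquiv.piFinSuccAbove (fun _ => ℝ) 0).trans
      ((MeasurableEquiv.refl ℝ).prodCongr MeasurableEquiv.finTwoArrow))

lemma measurePreserving_axialCoord : MeasurePreserving axialCoord volume volume := by
  have hpair : MeasurePreserving ((MeasurableEquiv.refl ℝ).prodCongr
      (MeasurableEquiv.finTwoArrow : (Fin 2 → ℝ) ≃ᵐ ℝ × ℝ)) volume volume := by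
    have := (MeasurePreserving.id (volume : Measure ℝ)).prod (volume_preserving_finTwoArrow ℝ)
    rwa [← Measure.volume_eq_prod, ← Measure.volume_eq_prod] at this
  exact (hpair.comp (volume_preserving_piFinSuccAbove (fun _ => ℝ) 0)).comp
    (EuclideanSpace.volume_preserving_symm_measurableEquiv_toLp (Fin 3))

lemma integral_comp_axial (G : ℝ → ℝ → ℝ)
    (hG : Integrable fun y : E3 => G (y 0) (y 1 ^ 2 + y 2 ^ 2)) :
    ∫ y : E3, G (y 0) (y 1 ^ 2 + y 2 ^ 2) = π * ∫ t, ∫ v in Ioi 0, G t v := by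
  have hmp := measurePreserving_axialCoord.symm
  have hemb := axialCoord.symm.measurableEmbedding
  have hG' : Integrable (fun q : ℝ × (ℝ × ℝ) => G q.1 (q.2.1 ^ 2 + q.2.2 ^ 2)) :=
    (hmp.integrable_comp_emb hemb).mpr hG
  rw [← hmp.integral_comp hemb]
  change ∫ q : ℝ × (ℝ × ℝ), G q.1 (q.2.1 ^ 2 + q.2.2 ^ 2) = _
  rw [Measure.volume_eq_prod] at hG' ⊢
  simp_rw [integral_prod _ hG', integral_comp_sq_add_sq, integral_const_mul]

lemma continuousOn_inv_norm_sub {E : Type*} [SeminormedAddCommGroup E] {x a : E} {s : ℝ}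
    (hs : s < ‖x - a‖) : ContinuousOn (fun y => ‖y - a‖⁻¹) (closedBall x s) := by
  refine (continuous_norm.comp (continuous_sub_right a)).continuousOn.inv₀ fun y hy => ?_
  have := norm_sub_le_norm_sub_add_norm_sub x y a
  rw [← dist_eq_norm x y, dist_comm] at this
  exact (by linarith [mem_closedBall.mp hy] : (0 : ℝ) < ‖y - a‖).ne'

lemma norm_sq_fin_three (y : E3) : ‖y‖ ^ 2 = y 0 ^ 2 + (y 1 ^ 2 + y 2 ^ 2) := by
  simp [EuclideanSpace.norm_sq_eq, Fin.sum_univ_three, add_assoc]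

/-- In the variable `v = y 1 ^ 2 + y 2 ^ 2`, the integral of `‖y - EuclideanSpace.single 0 d‖⁻¹`
over the slice of the ball `‖y‖ ≤ s` at height `y 0 = t`, up to the factor `π`. -/
lemma integral_Ioi_ite_inv_sqrt {s d t : ℝ} (hs : 0 ≤ s) (hsd : s < d) :
    ∫ v in Ioi 0, (if t ^ 2 + v ≤ s ^ 2 then (√((t - d) ^ 2 + v))⁻¹ else 0) =
      (Icc (-s) s).indicator (fun t => 2 * √(s ^ 2 + d ^ 2 - 2 * d * t) - 2 * (d - t)) t := by
  have hG : (fun v => if t ^ 2 + v ≤ s ^ 2 then (√((t - d) ^ 2 + v))⁻¹ else 0) =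
      (Iic (s ^ 2 - t ^ 2)).indicator fun v => (√(v + (d - t) ^ 2))⁻¹ := by
    ext v
    simp only [Set.indicator_apply, Set.mem_Iic, le_sub_iff_add_le, add_comm _ v,
      show (t - d) ^ 2 = (d - t) ^ 2 by ring]
  rw [hG, setIntegral_indicator measurableSet_Iic, Ioi_inter_Iic]
  by_cases ht : t ∈ Icc (-s) s
  · have hts : 0 ≤ s ^ 2 - t ^ 2 := by nlinarith [ht.1, ht.2]
    rw [indicator_of_mem ht, ← intervalIntegral.integral_of_le hts,
      integral_inv_sqrt_add_sq (by linarith [ht.2]) hts]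
    ring_nf
  · have hts : s ^ 2 - t ^ 2 < 0 := by
      rw [Set.mem_Icc, not_and_or, not_le, not_le] at ht
      rcases ht with ht | ht <;> nlinarith
    rw [indicator_of_notMem ht, Set.Ioc_eq_empty (by linarith), Measure.restrict_empty,
      integral_zero_measure]

lemma integral_closedBall_inv_norm_sub_single {s d : ℝ} (hs : 0 < s) (hsd : s < d) :
    ∫ y in closedBall (0 : E3) s, ‖y - EuclideanSpace.single 0 d‖⁻¹ =
      4 * π * s ^ 3 / (3 * d) := by
  set e : E3 := EuclideanSpace.single 0 d
  set G : ℝ → ℝ → ℝ := fun t v => if t ^ 2 + v ≤ s ^ 2 then (√((t - d) ^ 2 + v))⁻¹ else 0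
  have hG : (closedBall (0 : E3) s).indicator (fun y => ‖y - e‖⁻¹) =
      fun y => G (y 0) (y 1 ^ 2 + y 2 ^ 2) := by
    ext y
    have hmem : y ∈ closedBall 0 s ↔ y 0 ^ 2 + (y 1 ^ 2 + y 2 ^ 2) ≤ s ^ 2 := by
      rw [mem_closedBall_zero_iff, ← norm_sq_fin_three, sq_le_sq₀ (norm_nonneg _) hs.le]
    have hnorm : ‖y - e‖ = √((y 0 - d) ^ 2 + (y 1 ^ 2 + y 2 ^ 2)) := by
      rw [← sqrt_sq (norm_nonneg (y - e)), norm_sq_fin_three]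
      simp [e]
    classical
    simp only [Set.indicator_apply, hmem, hnorm, G]
  have hint : Integrable ((closedBall (0 : E3) s).indicator (fun y => ‖y - e‖⁻¹)) := by
    refine ((continuousOn_inv_norm_sub ?_).integrableOn_compact (isCompact_closedBall 0 s)
      ).integrable_indicator measurableSet_closedBall
    simpa [e, abs_of_pos (hs.trans hsd)] using hsd
  rw [hG] at hint
  rw [← integral_indicator measurableSet_closedBall, hG, integral_comp_axial G hint]
  simp only [G, integral_Ioi_ite_inv_sqrt hs.le hsd]
  rw [integral_indicator measurableSet_Icc, integral_Icc_eq_integral_Ioc,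
    ← intervalIntegral.integral_of_le (by linarith), integral_two_mul_sqrt_sub hs hsd]
  ring

theorem integral_closedBall_inv_norm_sub {x a : E3} {s : ℝ} (hs : 0 < s) (hsa : s < ‖x - a‖) :
    ∫ y in closedBall x s, ‖y - a‖⁻¹ = 4 * π * s ^ 3 / (3 * ‖x - a‖) := by
  set e : E3 := EuclideanSpace.single 0 ‖x - a‖
  have he : ‖e‖ = ‖a - x‖ := by simp [e, norm_sub_rev]
  set T : E3 ≃ₗᵢ[ℝ] E3 := (ℝ ∙ (e - (a - x)))ᗮ.reflection
  have hTe : T e = a - x := Submodule.reflection_sub he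
  set f : E3 → E3 := fun z => x + T z
  have hmp : MeasurePreserving f volume volume :=
    (measurePreserving_add_left volume x).comp T.measurePreserving
  have hemb : MeasurableEmbedding f :=
    (T.toHomeomorph.trans (Homeomorph.addLeft x)).measurableEmbedding
  have hpre : f ⁻¹' closedBall x s = closedBall 0 s := by
    ext z
    simp [f]
  have hnorm : ∀ z, ‖f z - a‖ = ‖z - e‖ := fun z => by
    rw [← T.norm_map (z - e), map_sub, hTe]
    simp only [f]
    congr 1
    abel
  rw [← hmp.setIntegral_preimage_emb hemb, hpre]
  simp_rw [hnorm]
  exact integral_closedBall_inv_norm_sub_single hs hsa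

theorem setAverage_closedBall_inv_norm_sub {x a : E3} {s : ℝ} (hs : 0 < s)
    (hsa : s < ‖x - a‖) : ⨍ y in closedBall x s, ‖y - a‖⁻¹ = ‖x - a‖⁻¹ := by
  rw [setAverage_eq, integral_closedBall_inv_norm_sub hs hsa, measureReal_def,
    EuclideanSpace.volume_closedBall_fin_three, ENNReal.toReal_mul, ENNReal.toReal_pow,
    ENNReal.toReal_ofReal hs.le, ENNReal.toReal_ofReal (by positivity), smul_eq_mul]
  field_simp

lemma analyticAt_norm_sub_rpow {E : Type*} [NormedAddCommGroup E] [InnerProductSpace ℝ E]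
    {a y : E} (hy : y ≠ a) (p : ℝ) : AnalyticAt ℝ (fun z => ‖z - a‖ ^ p) y := by
  have hsub : AnalyticAt ℝ (fun z : E => z - a) y := analyticAt_id.sub analyticAt_const
  have hsq : AnalyticAt ℝ (fun z => ‖z - a‖ ^ 2) y := by
    convert ((innerSL ℝ).analyticAt_bilinear (y - a, y - a)).comp
      (f := fun z => (z - a, z - a)) (hsub.prod hsub) using 2 with z
    exact (real_inner_self_eq_norm_sq _).symm
  have hpos : 0 < ‖y - a‖ ^ 2 := by
    have : y - a ≠ 0 := sub_ne_zero.mpr hy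
    positivity
  have hexp := (((analyticAt_log hpos).comp (f := fun z => ‖z - a‖ ^ 2) hsq).mul
    (analyticAt_const (v := p / 2))).rexp
  refine hexp.congr ?_
  filter_upwards [eventually_ne_nhds hy] with z hz
  have hz' : 0 < ‖z - a‖ := norm_pos_iff.mpr (sub_ne_zero.mpr hz)
  simp only [Function.comp_apply, Pi.mul_apply, rpow_def_of_pos hz', Real.log_pow]
  push_cast
  ring_nf

lemma eqOn_ball_of_le_setAverage {X : Type*} [MetricSpace X] [ProperSpace X] [MeasurableSpace X]
    [BorelSpace X] {μ : Measure X} [IsFiniteMeasureOnCompacts μ] [μ.IsOpenPosMeasure]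
    {f : X → ℝ} {x : X} {s : ℝ} (hf : ContinuousOn f (closedBall x s))
    (hmax : ∀ y ∈ closedBall x s, f y ≤ f x) (hmean : f x ≤ ⨍ y in closedBall x s, f y ∂μ) :
    EqOn f (fun _ => f x) (ball x s) := by
  set m := ⨍ y in closedBall x s, f y ∂μ
  have hint : IntegrableOn f (closedBall x s) μ :=
    hf.integrableOn_compact (isCompact_closedBall x s)
  have hzero : ∫ y in closedBall x s, (m - f y) ∂μ = 0 :=
    setIntegral_setAverage_sub (isCompact_closedBall x s).measure_lt_top.ne hint
  have hae : ∀ᵐ y ∂μ.restrict (closedBall x s), f y = m := by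
    have hnonneg : 0 ≤ᵐ[μ.restrict (closedBall x s)] fun y => m - f y :=
      (ae_restrict_iff' measurableSet_closedBall).mpr
        (Eventually.of_forall fun y hy => sub_nonneg.mpr ((hmax y hy).trans hmean))
    filter_upwards [(setIntegral_eq_zero_iff_of_nonneg_ae hnonneg
      ((integrableOn_const (isCompact_closedBall x s).measure_lt_top.ne).sub hint)).mp hzero]
      with y hy
    exact (sub_eq_zero.mp hy).symm
  have hball : EqOn f (fun _ => m) (ball x s) :=
    Measure.eqOn_open_of_ae_eq (ae_restrict_of_ae_restrict_of_subset ball_subset_closedBall hae)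
      isOpen_ball (hf.mono ball_subset_closedBall) continuousOn_const
  intro y hy
  rw [hball hy, hball (mem_ball_self (pos_of_mem_ball hy))]

theorem inv_norm_sub_rpow_le_setAverage {x a : E3} {s p : ℝ} (hs : 0 < s) (hsa : s < ‖x - a‖)
    (hp : 1 ≤ p) : ‖x - a‖⁻¹ ^ p ≤ ⨍ y in closedBall x s, ‖y - a‖⁻¹ ^ p := by
  have hcont := continuousOn_inv_norm_sub hsa
  have hcpt := isCompact_closedBall x s
  have hrpow : ContinuousOn (fun t : ℝ => t ^ p) (Ici 0) :=
    continuousOn_id.rpow_const fun _ _ => Or.inr (by linarith)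
  rw [← setAverage_closedBall_inv_norm_sub hs hsa]
  exact (convexOn_rpow hp).map_set_average_le hrpow isClosed_Ici
    (measure_closedBall_pos volume x hs).ne' hcpt.measure_lt_top.ne
    (Eventually.of_forall fun y => inv_nonneg.mpr (norm_nonneg _))
    (hcont.integrableOn_compact hcpt)
    ((hrpow.comp hcont fun y _ => inv_nonneg.mpr (norm_nonneg _)).integrableOn_compact hcpt)

section Vp

variable {n : ℕ} {A : Fin n → E3} {ζ : Fin n → ℝ} {p : ℝ}

lemma Vp_eq_sum_mul_inv_rpow (y : E3) : Vp A ζ p y = ∑ i, ζ i ^ p * ‖y - A i‖⁻¹ ^ p := by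
  simp only [Vp, inv_rpow (norm_nonneg _), div_eq_mul_inv]

theorem Vp_le_setAverage (hζ : ∀ i, 0 ≤ ζ i) (hp : 1 ≤ p) {x : E3} {s : ℝ} (hs : 0 < s)
    (hsA : ∀ i, s < ‖x - A i‖) : Vp A ζ p x ≤ ⨍ y in closedBall x s, Vp A ζ p y := by
  have hint : ∀ i, IntegrableOn (fun y => ζ i ^ p * ‖y - A i‖⁻¹ ^ p) (closedBall x s) :=
    fun i => (((continuousOn_inv_norm_sub (hsA i)).rpow_const fun _ _ =>
      Or.inr (by linarith)).const_smul (ζ i ^ p)).integrableOn_compact (isCompact_closedBall x s)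
  simp_rw [Vp_eq_sum_mul_inv_rpow]
  rw [setAverage_eq, integral_finsetSum _ fun i _ => hint i, Finset.smul_sum]
  gcongr with i
  rw [integral_const_mul, smul_eq_mul, mul_left_comm, ← smul_eq_mul (volume.real _)⁻¹,
    ← setAverage_eq]
  exact mul_le_mul_of_nonneg_left (inv_norm_sub_rpow_le_setAverage hs (hsA i) hp)
    (rpow_nonneg (hζ i) p)

theorem analyticOnNhd_Vp : AnalyticOnNhd ℝ (Vp A ζ p) {y | ∀ i, y ≠ A i} := fun _ hy =>
  Finset.analyticAt_fun_sum _ fun i _ => analyticAt_const.div (analyticAt_norm_sub_rpow (hy i) p)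
    (rpow_pos_of_pos (norm_pos_iff.mpr (sub_ne_zero.mpr (hy i))) p).ne'

theorem tendsto_Vp_nhdsNE (hζ : ∀ i, 0 ≤ ζ i) {i : Fin n} (hζi : 0 < ζ i) (hp : 0 < p) :
    Tendsto (Vp A ζ p) (𝓝[≠] A i) atTop := by
  have hterm : Tendsto (fun y => ζ i ^ p * ‖y - A i‖ ^ (-p)) (𝓝[≠] A i) atTop :=
    ((tendsto_rpow_neg_nhdsGT_zero (neg_neg_of_pos hp)).comp
      (tendsto_norm_sub_self_nhdsNE (A i))).const_mul_atTop (rpow_pos_of_pos hζi p)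
  refine tendsto_atTop_mono (fun y => ?_) hterm
  rw [rpow_neg (norm_nonneg _), ← div_eq_mul_inv]
  exact Finset.single_le_sum (f := fun j => ζ j ^ p / ‖y - A j‖ ^ p)
    (fun j _ => div_nonneg (rpow_nonneg (hζ j) p) (rpow_nonneg (norm_nonneg _) p))
    (Finset.mem_univ i)

end Vp

lemma IsLocalMax.exists_closedBall_of_forall_ne {E : Type*} [NormedAddCommGroup E] {ι : Type*}
    [Finite ι] {f : E → ℝ} {x : E} (h : IsLocalMax f x) {A : ι → E} (hx : ∀ i, x ≠ A i) :
    ∃ s, 0 < s ∧ (∀ i, s < ‖x - A i‖) ∧ ∀ y ∈ closedBall x s, f y ≤ f x := by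
  obtain ⟨ε, hε, hεmax⟩ := nhds_basis_closedBall.eventually_iff.mp h
  have hsmall : ∀ᶠ s in 𝓝[>] (0 : ℝ), 0 < s ∧ s ≤ ε ∧ ∀ i, s < ‖x - A i‖ := by
    filter_upwards [self_mem_nhdsWithin, nhdsWithin_le_nhds (eventually_le_nhds hε),
      nhdsWithin_le_nhds (eventually_all.mpr fun i =>
        eventually_lt_nhds (norm_pos_iff.mpr (sub_ne_zero.mpr (hx i))))] with s h0 hε hA
    exact ⟨h0, hε, hA⟩
  obtain ⟨s, hs, hsε, hsA⟩ := hsmall.exists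
  exact ⟨s, hs, hsA, fun _ hy => hεmax (closedBall_subset_closedBall hsε hy)⟩

theorem stmt15_general (n : ℕ) (hn : 0 < n) (A : Fin n → E3)
    (ζ : Fin n → ℝ) (hζ : ∀ i, 0 < ζ i) (p : ℝ) (hp : 1 ≤ p) :
    ∀ x : E3, (∀ i, x ≠ A i) →
      ¬ IsLocalMaxOn (Vp A ζ p) {y : E3 | ∀ i, y ≠ A i} x := by
  intro x hx hmax
  set Ω : Set E3 := {y | ∀ i, y ≠ A i}
  have hΩ : Ω = (range A)ᶜ := by ext; simp [Ω, eq_comm]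
  have hζ' : ∀ i, 0 ≤ ζ i := fun i => (hζ i).le
  have hloc : IsLocalMax (Vp A ζ p) x :=
    hmax.isLocalMax (hΩ ▸ (finite_range A).isClosed.isOpen_compl.mem_nhds (hΩ ▸ hx))
  obtain ⟨s, hs, hsA, hsmax⟩ := hloc.exists_closedBall_of_forall_ne hx
  have hsub : closedBall x s ⊆ Ω := fun y hy i hyA => by
    rw [mem_closedBall', hyA, dist_eq_norm] at hy
    exact (hsA i).not_ge hy
  have hball : EqOn (Vp A ζ p) (fun _ => Vp A ζ p x) (ball x s) :=
    eqOn_ball_of_le_setAverage (analyticOnNhd_Vp.continuousOn.mono hsub) hsmax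
      (Vp_le_setAverage hζ' hp hs hsA)
  have hconn : IsPreconnected Ω := by
    refine hΩ ▸ ((finite_range A).countable.isPathConnected_compl_of_one_lt_rank ?_
      ).isConnected.isPreconnected
    rw [← Module.finrank_eq_rank, finrank_euclideanSpace_fin]
    norm_num
  have hconst : EqOn (Vp A ζ p) (fun _ => Vp A ζ p x) Ω :=
    analyticOnNhd_Vp.eqOn_of_preconnected_of_eventuallyEq analyticOnNhd_const hconn hx
      (eventuallyEq_of_mem (ball_mem_nhds x hs) hball)
  have hΩ_near : Ω ∈ 𝓝[≠] A ⟨0, hn⟩ :=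
    nhdsNE_le_cofinite _ (hΩ ▸ (finite_range A).compl_mem_cofinite)
  exact not_tendsto_const_atTop (Vp A ζ p x) _ ((tendsto_Vp_nhdsNE hζ' (hζ ⟨0, hn⟩)
    (by linarith)).congr' (eventually_of_mem hΩ_near hconst))

/-- for `p ≥ 1` and positive charges, `V_p` has no local maximum on
its domain `ℝ³ ∖ {A_1, …, A_n}`. -/
theorem stmt15 (n : ℕ) (hn : 0 < n) (A : Fin n → E3) (hA : Function.Injective A)
    (ζ : Fin n → ℝ) (hζ : ∀ i, 0 < ζ i) (p : ℝ) (hp : 1 ≤ p) :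
    ∀ x : E3, (∀ i, x ≠ A i) →
      ¬ IsLocalMaxOn (Vp A ζ p) {y : E3 | ∀ i, y ≠ A i} x :=
  stmt15_general n hn A ζ hζ p hp
end
end

section
/- Let p > 0 be an even integer, let A_1, …, A_n be distinct points in ℝ³ carrying unit charges, and let V_p(x) = Σ_{i=1}^n 1/‖x − A_i‖^p. Then for every straight line L ⊂ ℝ³ that avoids the points A_1, …, A_n, the restriction of V_p to L has at most p(n−1) + 2n − 1 critical points; that is, for any parametrization γ(t) = a + t·v of L with v ≠ 0, the real function t ↦ V_p(γ(t)) has at most p(n−1) + 2n − 1 points where its derivative vanishes. -/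
/-!
Along the line, `‖a + t • v - A i‖ ^ 2` is a real quadratic `q i` in `t` with leading coefficient
`‖v‖ ^ 2` and no real zero, and with `p = 2m` the potential is `∑ i, (q i) ^ (-m)`. Its derivative is
`-m P / ∏ j, q j ^ (m + 1)` with `P = ∑ i, q i' * ∏ j ≠ i, q j ^ (m + 1)`. Every summand of `P` has
degree `1 + 2(m + 1)(n - 1) = p(n - 1) + 2n - 1` and a positive leading coefficient, so these cannot
cancel: `P` is a nonzero polynomial of that degree, and the critical points are among its roots.
-/

noncomputable section

open Finset

/-- The modified electrostatic potential of unit point charges at the points `A i`,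
with natural exponent `p`. -/
def VpLine {n : ℕ} (A : Fin n → E3) (p : ℕ) : E3 → ℝ :=
  fun x => ∑ i, 1 / ‖x - A i‖ ^ p

open Polynomial

namespace Polynomial

theorem finite_and_ncard_le_natDegree_of_isRoot {R : Type*} [CommRing R] [IsDomain R]
    {P : R[X]} (hP : P ≠ 0) {S : Set R} (hS : ∀ t ∈ S, P.IsRoot t) :
    S.Finite ∧ S.ncard ≤ P.natDegree := by
  classical
  have hsub : S ⊆ P.roots.toFinset := fun t ht => by simpa [hP] using hS t ht
  refine ⟨P.roots.toFinset.finite_toSet.subset hsub, ?_⟩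
  calc S.ncard ≤ (P.roots.toFinset : Set R).ncard := Set.ncard_le_ncard hsub (finite_toSet _)
    _ = P.roots.toFinset.card := Set.ncard_coe_finset _
    _ ≤ Multiset.card P.roots := Multiset.toFinset_card_le _
    _ ≤ P.natDegree := P.card_roots'

section Ordered

variable {R : Type*} [CommRing R] [LinearOrder R] [IsStrictOrderedRing R]

theorem coeff_sum_pos {ι : Type*} {s : Finset ι} (hs : s.Nonempty) {f : ι → R[X]} {d : ℕ}
    (hdeg : ∀ i ∈ s, (f i).natDegree = d) (hlc : ∀ i ∈ s, 0 < (f i).leadingCoeff) :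
    0 < (∑ i ∈ s, f i).coeff d := by
  rw [finsetSum_coeff]
  exact sum_pos (fun i hi => hdeg i hi ▸ hlc i hi) hs

variable {ι : Type*} [Fintype ι] [DecidableEq ι]

def sumInvPowDerivNum (q : ι → R[X]) (m : ℕ) : R[X] :=
  ∑ i, derivative (q i) * ∏ j ∈ univ.erase i, q j ^ (m + 1)

variable {q : ι → R[X]} {d : ℕ}

theorem natDegree_derivative_mul_prod_erase_pow (hd : d ≠ 0)
    (hdeg : ∀ i, (q i).natDegree = d) (hlc : ∀ i, 0 < (q i).leadingCoeff) (m : ℕ) (i : ι) :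
    (derivative (q i) * ∏ j ∈ univ.erase i, q j ^ (m + 1)).natDegree
      = d - 1 + (Fintype.card ι - 1) * (d * (m + 1)) := by
  have hq : ∀ j, q j ≠ 0 := fun j => leadingCoeff_ne_zero.mp (hlc j).ne'
  have hq' : derivative (q i) ≠ 0 := by simp [hdeg, hd]
  have hprod : ∏ j ∈ univ.erase i, q j ^ (m + 1) ≠ 0 :=
    prod_ne_zero_iff.mpr fun j _ => pow_ne_zero _ (hq j)
  rw [natDegree_mul hq' hprod, natDegree_prod _ _ fun j _ => pow_ne_zero _ (hq j)]
  simp [natDegree_pow, hdeg, card_erase_of_mem, mul_comm]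

theorem leadingCoeff_derivative_mul_prod_erase_pow_pos (hd : d ≠ 0)
    (hdeg : ∀ i, (q i).natDegree = d) (hlc : ∀ i, 0 < (q i).leadingCoeff) (m : ℕ) (i : ι) :
    0 < (derivative (q i) * ∏ j ∈ univ.erase i, q j ^ (m + 1)).leadingCoeff := by
  rw [leadingCoeff_mul, leadingCoeff_prod, leadingCoeff_derivative, hdeg]
  have hd' : (0 : R) < d := by exact_mod_cast Nat.pos_of_ne_zero hd
  exact mul_pos (mul_pos (hlc i) hd') (prod_pos fun j _ => by simpa using pow_pos (hlc j) _)

theorem sumInvPowDerivNum_ne_zero_and_natDegree_le [Nonempty ι] (hd : d ≠ 0)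
    (hdeg : ∀ i, (q i).natDegree = d) (hlc : ∀ i, 0 < (q i).leadingCoeff) (m : ℕ) :
    sumInvPowDerivNum q m ≠ 0 ∧
      (sumInvPowDerivNum q m).natDegree ≤ d - 1 + (Fintype.card ι - 1) * (d * (m + 1)) := by
  have hterm := natDegree_derivative_mul_prod_erase_pow hd hdeg hlc m
  refine ⟨fun h => ?_, natDegree_sum_le_of_forall_le _ _ fun i _ => (hterm i).le⟩
  have := coeff_sum_pos univ_nonempty (fun i _ => hterm i)
    fun i _ => leadingCoeff_derivative_mul_prod_erase_pow_pos hd hdeg hlc m i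
  rw [← sumInvPowDerivNum, h, coeff_zero] at this
  exact this.false

end Ordered

section Deriv

variable {𝕜 : Type*} [NontriviallyNormedField 𝕜]

theorem hasDerivAt_inv_pow_eval (q : 𝕜[X]) (m : ℕ) {t : 𝕜} (ht : q.eval t ≠ 0) :
    HasDerivAt (fun s => (q.eval s ^ m)⁻¹)
      (-(m * (derivative q).eval t) / q.eval t ^ (m + 1)) t := by
  refine (((q.hasDerivAt t).pow m).inv (pow_ne_zero m ht)).congr_deriv ?_
  rcases m with _ | m
  · simp
  · simp only [Pi.pow_apply, Nat.add_sub_cancel]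
    field_simp
    ring

theorem hasDerivAt_sum_inv_pow_eval {ι : Type*} [Fintype ι] [DecidableEq ι] (q : ι → 𝕜[X])
    (m : ℕ) {t : 𝕜} (ht : ∀ i, (q i).eval t ≠ 0) :
    HasDerivAt (fun s => ∑ i, ((q i).eval s ^ m)⁻¹)
      (-(m * (sumInvPowDerivNum q m).eval t) / ∏ i, (q i).eval t ^ (m + 1)) t := by
  have hsum : ∀ i, -(m * (derivative (q i)).eval t) / (q i).eval t ^ (m + 1)
      = -(m * (derivative (q i) * ∏ j ∈ univ.erase i, q j ^ (m + 1)).eval t)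
          / ∏ j, (q j).eval t ^ (m + 1) := by
    intro i
    have hE : ∏ j ∈ univ.erase i, (q j).eval t ^ (m + 1) ≠ 0 :=
      prod_ne_zero_iff.mpr fun j _ => pow_ne_zero _ (ht j)
    rw [← mul_prod_erase univ _ (mem_univ i), eval_mul, eval_prod]
    simp only [eval_pow]
    field_simp
  have := HasDerivAt.fun_sum fun i (_ : i ∈ univ) => hasDerivAt_inv_pow_eval (q i) m (ht i)
  simp only [hsum, ← sum_div, sum_neg_distrib, ← mul_sum, ← eval_finsetSum] at this
  exact this

end Deriv

theorem finite_and_ncard_deriv_sum_inv_pow_eq_zero_le {ι : Type*} [Fintype ι] [DecidableEq ι]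
    [Nonempty ι] {q : ι → ℝ[X]} {m d : ℕ} (hm : m ≠ 0) (hd : d ≠ 0)
    (hq : ∀ i t, (q i).eval t ≠ 0) (hdeg : ∀ i, (q i).natDegree = d)
    (hlc : ∀ i, 0 < (q i).leadingCoeff) :
    {t | deriv (fun s => ∑ i, ((q i).eval s ^ m)⁻¹) t = 0}.Finite ∧
      {t | deriv (fun s => ∑ i, ((q i).eval s ^ m)⁻¹) t = 0}.ncard
        ≤ d - 1 + (Fintype.card ι - 1) * (d * (m + 1)) := by
  obtain ⟨hP, hdegP⟩ := sumInvPowDerivNum_ne_zero_and_natDegree_le hd hdeg hlc m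
  refine (finite_and_ncard_le_natDegree_of_isRoot hP fun t ht => ?_).imp_right hdegP.trans'
  have hprod : ∏ i, (q i).eval t ^ (m + 1) ≠ 0 :=
    prod_ne_zero_iff.mpr fun i _ => pow_ne_zero _ (hq i t)
  rw [Set.mem_ofPred_eq, (hasDerivAt_sum_inv_pow_eval q m (hq · t)).deriv] at ht
  simpa [hm, hprod] using ht

end Polynomial

section LineNormSq

variable {E : Type*} [NormedAddCommGroup E] [InnerProductSpace ℝ E]

def lineNormSq (a v b : E) : ℝ[X] :=
  C (‖v‖ ^ 2) * X ^ 2 + C (2 * inner ℝ v (a - b)) * X + C (‖a - b‖ ^ 2)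

theorem eval_lineNormSq (a v b : E) (t : ℝ) :
    (lineNormSq a v b).eval t = ‖a + t • v - b‖ ^ 2 := by
  rw [add_sub_right_comm, add_comm, norm_add_sq_real, norm_smul, inner_smul_left]
  simp [lineNormSq, mul_pow]
  ring

theorem natDegree_lineNormSq {v : E} (hv : v ≠ 0) (a b : E) : (lineNormSq a v b).natDegree = 2 :=
  natDegree_quadratic (by simpa using hv)

theorem leadingCoeff_lineNormSq {v : E} (hv : v ≠ 0) (a b : E) :
    (lineNormSq a v b).leadingCoeff = ‖v‖ ^ 2 :=
  leadingCoeff_quadratic (by simpa using hv)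

end LineNormSq

theorem stmt18_general (n : ℕ) (hn : 0 < n) (p : ℕ) (hp : 0 < p) (hpe : Even p)
    (A : Fin n → E3)
    (a v : E3) (hv : v ≠ 0) (hline : ∀ (t : ℝ) (i : Fin n), a + t • v ≠ A i) :
    {t : ℝ | deriv (fun s : ℝ => VpLine A p (a + s • v)) t = 0}.Finite ∧
    {t : ℝ | deriv (fun s : ℝ => VpLine A p (a + s • v)) t = 0}.ncard ≤
      p * (n - 1) + 2 * n - 1 := by
  obtain ⟨m, rfl⟩ := hpe
  have : Nonempty (Fin n) := ⟨⟨0, hn⟩⟩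
  have hV : (fun s : ℝ => VpLine A (m + m) (a + s • v))
      = fun s => ∑ i, ((lineNormSq a v (A i)).eval s ^ m)⁻¹ := by
    funext s
    simp only [VpLine, eval_lineNormSq, one_div, ← pow_mul, ← two_mul]
  have hq : ∀ i t, (lineNormSq a v (A i)).eval t ≠ 0 := fun i t => by
    rw [eval_lineNormSq]
    exact pow_ne_zero _ (norm_ne_zero_iff.mpr (sub_ne_zero.mpr (hline t i)))
  have hlc : ∀ i, 0 < (lineNormSq a v (A i)).leadingCoeff := fun i => by
    rw [leadingCoeff_lineNormSq hv]
    positivity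
  obtain ⟨hfin, hcard⟩ := finite_and_ncard_deriv_sum_inv_pow_eq_zero_le (m := m) (by omega)
    two_ne_zero hq (fun i => natDegree_lineNormSq hv a (A i)) hlc
  rw [hV]
  refine ⟨hfin, hcard.trans (le_of_eq ?_)⟩
  obtain ⟨k, rfl⟩ := Nat.exists_eq_add_of_lt hn
  simp only [Fintype.card_fin]
  ring_nf
  omega

/-- for even `p > 0`, the restriction of `V_p` to any straight line
avoiding the charges has at most `p(n-1) + 2n - 1` critical points. -/
theorem stmt18 (n : ℕ) (hn : 0 < n) (p : ℕ) (hp : 0 < p) (hpe : Even p)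
    (A : Fin n → E3) (hA : Function.Injective A)
    (a v : E3) (hv : v ≠ 0) (hline : ∀ (t : ℝ) (i : Fin n), a + t • v ≠ A i) :
    {t : ℝ | deriv (fun s : ℝ => VpLine A p (a + s • v)) t = 0}.Finite ∧
    {t : ℝ | deriv (fun s : ℝ => VpLine A p (a + s • v)) t = 0}.ncard ≤
      p * (n - 1) + 2 * n - 1 :=
  stmt18_general n hn p hp hpe A a v hv hline
end
end
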